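/- arXiv:2209.14432 — 5 statements merged into one kernel-verified Lean document; each statement's English description precedes it below -/
import Mathlib

section
/- Let (X, Y) be a martingale coupling on ℝ (i.e., E[Y | X] = X and both X, Y are integrable) whose disintegration kernel κ_x satisfies κ_x = δ_x for all x in a Borel set A. If d_μ and d_ν denote the densities of the laws μ of X and ν of Y with respect to μ + ν, then d_μ ≤ d_ν holds μ-almost everywhere on A. -/
open MeasureTheory ProbabilityTheory Filter Topology

noncomputable section

/-- Convex order on measures on ℝ. -/
def ConvexOrder (μ ν : Measure ℝ) : Prop :=
  ∀ φ : ℝ → ℝ, ConvexOn ℝ Set.univ φ → Integrable φ μ → Integrable φ ν →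
    ∫ x, φ x ∂μ ≤ ∫ x, φ x ∂ν

/-- Extended convex order (nonnegative convex test functions). -/
def ExtConvexOrder (μ ν : Measure ℝ) : Prop :=
  ∀ φ : ℝ → ℝ, ConvexOn ℝ Set.univ φ → (∀ x, 0 ≤ φ x) → Integrable φ μ → Integrable φ ν →
    ∫ x, φ x ∂μ ≤ ∫ x, φ x ∂ν

/-- π is a coupling of μ and ν. -/
def IsCoupling (π : Measure (ℝ × ℝ)) (μ ν : Measure ℝ) : Prop :=
  π.map Prod.fst = μ ∧ π.map Prod.snd = ν

/-- π is a martingale coupling: a coupling with E[Y|X] = X. -/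
def IsMartingaleCoupling (π : Measure (ℝ × ℝ)) (μ ν : Measure ℝ) : Prop :=
  IsCoupling π μ ν ∧
  ∀ A : Set ℝ, MeasurableSet A →
    ∫ p in (A ×ˢ (Set.univ : Set ℝ)), p.2 ∂π = ∫ p in (A ×ˢ (Set.univ : Set ℝ)), p.1 ∂π

/-- π is a backward Monge transport over the second marginal ν. -/
def IsBackwardMonge (π : Measure (ℝ × ℝ)) (ν : Measure ℝ) : Prop :=
  ∃ h : ℝ → ℝ, Measurable h ∧ π = ν.map (fun y => (h y, y))

/-- f is a backward Monge martingale transport map from ν to f_#ν: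
E[Y | f(Y)] = f(Y) where Y ∼ ν. -/
def IsBMMTMap (f : ℝ → ℝ) (ν : Measure ℝ) : Prop :=
  Measurable f ∧ ∀ A : Set ℝ, MeasurableSet A →
    ∫ y in f ⁻¹' A, y ∂ν = ∫ y in f ⁻¹' A, f y ∂ν

/-- μ ≤_MM ν : existence of a backward Monge martingale transport from μ to ν. -/
def leMM (μ ν : Measure ℝ) : Prop := ∃ f : ℝ → ℝ, IsBMMTMap f ν ∧ ν.map f = μ

/-- θ is the shadow of μ in ν: the ≤_cx-minimal measure θ with μ ≤_cx θ ≤ ν. -/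
def IsShadow (ν μ θ : Measure ℝ) : Prop :=
  ConvexOrder μ θ ∧ θ ≤ ν ∧
    ∀ θ' : Measure ℝ, ConvexOrder μ θ' → θ' ≤ ν → ConvexOrder θ θ'

end

/-
If `κ x = δ_x` on `A`, the part of `μ` living on `A` is transported to itself, so `μ|_A ≤ ν`;
an inequality between measures dominated by `μ + ν` passes to their densities.
-/

namespace MeasureTheory.Measure

variable {α : Type*} [MeasurableSpace α]

lemma rnDeriv_le_rnDeriv_of_le {μ ν ξ : Measure α} [SigmaFinite ν] [SigmaFinite ξ]
    (hμν : μ ≤ ν) (hνξ : ν ≪ ξ) : μ.rnDeriv ξ ≤ᵐ[ξ] ν.rnDeriv ξ := by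
  refine ae_le_of_forall_setLIntegral_le_of_sigmaFinite (μ.measurable_rnDeriv ξ) fun s _ _ => ?_
  calc ∫⁻ x in s, μ.rnDeriv ξ x ∂ξ ≤ μ s := setLIntegral_rnDeriv_le s
    _ ≤ ν s := hμν s
    _ = ∫⁻ x in s, ν.rnDeriv ξ x ∂ξ := (setLIntegral_rnDeriv hνξ s).symm

lemma restrict_le_snd_compProd_of_eq_dirac {μ : Measure α} [SFinite μ] {κ : Kernel α α}
    [IsSFiniteKernel κ] {A : Set α} (hA : MeasurableSet A) (hκ : ∀ x ∈ A, κ x = dirac x) :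
    μ.restrict A ≤ (μ ⊗ₘ κ).snd := by
  refine le_iff.mpr fun s hs => ?_
  rw [snd_compProd, bind_apply hs κ.aemeasurable, restrict_apply hs]
  calc μ (s ∩ A) = ∫⁻ x in A, s.indicator 1 x ∂μ := by
        rw [lintegral_indicator_one hs, restrict_apply hs]
    _ = ∫⁻ x in A, κ x s ∂μ := by
        refine setLIntegral_congr_fun hA fun x hx => ?_
        rw [hκ x hx, dirac_apply' x hs]
    _ ≤ ∫⁻ x, κ x s ∂μ := setLIntegral_le_lintegral A _

end MeasureTheory.Measure

open MeasureTheory ProbabilityTheory in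
theorem stmt1_general (μ ν : Measure ℝ) [IsProbabilityMeasure μ] [IsProbabilityMeasure ν]
    (π : Measure (ℝ × ℝ)) (κ : Kernel ℝ ℝ) [IsMarkovKernel κ]
    (hπ : IsMartingaleCoupling π μ ν) (hdis : π = μ.compProd κ)
    (A : Set ℝ) (hA : MeasurableSet A) (hκ : ∀ x ∈ A, κ x = Measure.dirac x) :
    ∀ᵐ x ∂(μ.restrict A), μ.rnDeriv (μ + ν) x ≤ ν.rnDeriv (μ + ν) x := by
  have hle : μ.restrict A ≤ ν := by
    rw [← hπ.1.2, hdis]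
    exact Measure.restrict_le_snd_compProd_of_eq_dirac hA hκ
  have hdens : (μ.restrict A).rnDeriv (μ + ν) ≤ᵐ[μ + ν] ν.rnDeriv (μ + ν) :=
    Measure.rnDeriv_le_rnDeriv_of_le hle (Measure.AbsolutelyContinuous.rfl.add_right' μ)
  have hac : μ.restrict A ≪ μ + ν :=
    Measure.restrict_le_self.absolutelyContinuous.trans
      (Measure.AbsolutelyContinuous.rfl.add_right ν)
  filter_upwards [hac hdens, hac (Measure.rnDeriv_restrict μ (μ + ν) hA), ae_restrict_mem hA]
    with x hx hrestrict hxA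
  rwa [hrestrict, Set.indicator_of_mem hxA] at hx

open MeasureTheory ProbabilityTheory in
theorem stmt1 (μ ν : Measure ℝ) [IsProbabilityMeasure μ] [IsProbabilityMeasure ν]
    (hμ : Integrable (fun x => x) μ) (hν : Integrable (fun x => x) ν)
    (π : Measure (ℝ × ℝ)) (κ : Kernel ℝ ℝ) [IsMarkovKernel κ]
    (hπ : IsMartingaleCoupling π μ ν) (hdis : π = μ.compProd κ)
    (A : Set ℝ) (hA : MeasurableSet A) (hκ : ∀ x ∈ A, κ x = Measure.dirac x) :
    ∀ᵐ x ∂(μ.restrict A), μ.rnDeriv (μ + ν) x ≤ ν.rnDeriv (μ + ν) x :=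
  stmt1_general μ ν π κ hπ hdis A hA hκ
end

section
/- The binary relation ≤_MM on probability measures on ℝ with finite first moment, defined by μ ≤_MM ν if and only if there exists a measurable function f : ℝ → ℝ such that for Y with law ν, f(Y) has law μ and E[Y | f(Y)] = f(Y), is a partial order (reflexive, antisymmetric, and transitive). -/
open MeasureTheory ProbabilityTheory Filter Topology

/-! The identity is a backward Monge martingale map, and such maps compose by the tower
property, which gives reflexivity and transitivity. For antisymmetry, the martingale property
yields conditional Jensen for the call payoffs `(y - a)⁺`, so `μ ≤_MM ν` forces
`∫ (x - a)⁺ dμ ≤ ∫ (x - a)⁺ dν` for every `a`. In both directions the call functions then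
agree; their difference quotients over `[a, b]` lie between the tails `μ(b, ∞)` and `μ(a, ∞)`,
so by right-continuity they determine the cdf. -/

open MeasureTheory ProbabilityTheory Set

lemma IsBMMTMap.id (ν : Measure ℝ) : IsBMMTMap id ν := ⟨measurable_id, fun _ _ => rfl⟩

lemma IsBMMTMap.comp {f g : ℝ → ℝ} {ν : Measure ℝ} (hg : IsBMMTMap g ν)
    (hf : IsBMMTMap f (ν.map g)) : IsBMMTMap (f ∘ g) ν := by
  refine ⟨hf.1.comp hg.1, fun A hA => ?_⟩
  have hfA : MeasurableSet (f ⁻¹' A) := hf.1 hA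
  calc ∫ y in g ⁻¹' (f ⁻¹' A), y ∂ν
      = ∫ y in g ⁻¹' (f ⁻¹' A), g y ∂ν := hg.2 _ hfA
    _ = ∫ x in f ⁻¹' A, x ∂ν.map g :=
        (setIntegral_map hfA aestronglyMeasurable_id hg.1.aemeasurable).symm
    _ = ∫ x in f ⁻¹' A, f x ∂ν.map g := hf.2 A hA
    _ = ∫ y in g ⁻¹' (f ⁻¹' A), f (g y) ∂ν :=
        setIntegral_map hfA hf.1.aestronglyMeasurable hg.1.aemeasurable

lemma leMM_refl (μ : Measure ℝ) : leMM μ μ := ⟨id, IsBMMTMap.id μ, Measure.map_id⟩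

lemma leMM_trans {η μ ν : Measure ℝ} (hημ : leMM η μ) (hμν : leMM μ ν) : leMM η ν := by
  obtain ⟨f, hf, rfl⟩ := hημ
  obtain ⟨g, hg, rfl⟩ := hμν
  exact ⟨f ∘ g, hg.comp hf, (Measure.map_map hf.1 hg.1).symm⟩

noncomputable def callFunction (μ : Measure ℝ) (a : ℝ) : ℝ := ∫ x, max (x - a) 0 ∂μ

section CallFunction

variable {μ : Measure ℝ}

lemma integrable_max_sub_zero [IsFiniteMeasure μ] (hμ : Integrable (fun x => x) μ) (a : ℝ) :
    Integrable (fun x => max (x - a) 0) μ :=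
  (hμ.sub (integrable_const a)).pos_part

lemma indicator_Ioi_le_max_sub_zero_sub {a b : ℝ} (hab : a ≤ b) (x : ℝ) :
    (Ioi b).indicator (fun _ => b - a) x ≤ max (x - a) 0 - max (x - b) 0 := by
  by_cases hx : b < x <;> simp only [indicator, mem_Ioi, hx, if_true, if_false, max_def] <;>
    split_ifs <;> linarith

lemma max_sub_zero_sub_le_indicator_Ioi {a b : ℝ} (hab : a ≤ b) (x : ℝ) :
    max (x - a) 0 - max (x - b) 0 ≤ (Ioi a).indicator (fun _ => b - a) x := by
  by_cases hx : a < x <;> simp only [indicator, mem_Ioi, hx, if_true, if_false, max_def] <;>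
    split_ifs <;> linarith

variable [IsFiniteMeasure μ] {a b : ℝ}

lemma callFunction_sub_eq_integral (hμ : Integrable (fun x => x) μ) (a b : ℝ) :
    callFunction μ a - callFunction μ b = ∫ x, (max (x - a) 0 - max (x - b) 0) ∂μ :=
  (integral_sub (integrable_max_sub_zero hμ a) (integrable_max_sub_zero hμ b)).symm

lemma measureReal_Ioi_mul_le_callFunction_sub (hμ : Integrable (fun x => x) μ)
    (hab : a ≤ b) :
    μ.real (Ioi b) * (b - a) ≤ callFunction μ a - callFunction μ b := by
  rw [callFunction_sub_eq_integral hμ, ← smul_eq_mul,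
    ← integral_indicator_const _ measurableSet_Ioi]
  exact integral_mono ((integrable_const _).indicator measurableSet_Ioi)
    ((integrable_max_sub_zero hμ a).sub (integrable_max_sub_zero hμ b))
    (indicator_Ioi_le_max_sub_zero_sub hab)

lemma callFunction_sub_le_measureReal_Ioi_mul (hμ : Integrable (fun x => x) μ)
    (hab : a ≤ b) :
    callFunction μ a - callFunction μ b ≤ μ.real (Ioi a) * (b - a) := by
  rw [callFunction_sub_eq_integral hμ, ← smul_eq_mul,
    ← integral_indicator_const _ measurableSet_Ioi]
  exact integral_mono ((integrable_max_sub_zero hμ a).sub (integrable_max_sub_zero hμ b))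
    ((integrable_const _).indicator measurableSet_Ioi)
    (max_sub_zero_sub_le_indicator_Ioi hab)

end CallFunction

lemma cdf_le_of_callFunction_eq {μ ν : Measure ℝ} [IsProbabilityMeasure μ]
    [IsProbabilityMeasure ν] (hμ : Integrable (fun x => x) μ) (hν : Integrable (fun x => x) ν)
    (h : callFunction μ = callFunction ν) (a : ℝ) : cdf ν a ≤ cdf μ a := by
  rw [← (cdf μ).iInf_Ioi_eq a]
  refine le_ciInf fun ⟨b, hab⟩ => ?_
  have hab' : 0 < b - a := sub_pos.mpr hab
  have hIoi : μ.real (Ioi b) ≤ ν.real (Ioi a) := le_of_mul_le_mul_right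
    ((measureReal_Ioi_mul_le_callFunction_sub hμ hab.le).trans
      (h ▸ callFunction_sub_le_measureReal_Ioi_mul hν hab.le)) hab'
  rw [← compl_Iic, ← compl_Iic, probReal_compl_eq_one_sub measurableSet_Iic,
    probReal_compl_eq_one_sub measurableSet_Iic] at hIoi
  rw [cdf_eq_real, cdf_eq_real]
  linarith

lemma eq_of_callFunction_eq {μ ν : Measure ℝ} [IsProbabilityMeasure μ]
    [IsProbabilityMeasure ν] (hμ : Integrable (fun x => x) μ) (hν : Integrable (fun x => x) ν)
    (h : callFunction μ = callFunction ν) : μ = ν :=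
  Measure.eq_of_cdf μ ν <| StieltjesFunction.ext fun a =>
    le_antisymm (cdf_le_of_callFunction_eq hν hμ h.symm a) (cdf_le_of_callFunction_eq hμ hν h a)

lemma IsBMMTMap.callFunction_map_le {f : ℝ → ℝ} {ν : Measure ℝ} [IsFiniteMeasure ν]
    (hf : IsBMMTMap f ν) (hfi : Integrable f ν) (hν : Integrable (fun x => x) ν) (a : ℝ) :
    callFunction (ν.map f) a ≤ callFunction ν a := by
  set S := f ⁻¹' Ioi a
  have hS : MeasurableSet S := hf.1 measurableSet_Ioi
  have hpos : (fun y => max (f y - a) 0) = S.indicator (fun y => f y - a) := by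
    ext y
    by_cases hy : a < f y
    · simp [S, hy, max_eq_left (sub_nonneg.mpr hy.le)]
    · simp [S, hy, not_lt.mp hy]
  calc callFunction (ν.map f) a
      = ∫ y in S, (f y - a) ∂ν := by
        rw [callFunction, integral_map hf.1.aemeasurable (by fun_prop), hpos,
          integral_indicator hS]
    _ = ∫ y in S, (y - a) ∂ν := by
        rw [integral_sub hfi.integrableOn (integrable_const a).integrableOn,
          integral_sub hν.integrableOn (integrable_const a).integrableOn, hf.2 _ measurableSet_Ioi]
    _ ≤ ∫ y in S, max (y - a) 0 ∂ν :=
        setIntegral_mono (hν.integrableOn.sub (integrable_const a).integrableOn)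
          (integrable_max_sub_zero hν a).integrableOn fun y => le_max_left _ _
    _ ≤ callFunction ν a :=
        setIntegral_le_integral (integrable_max_sub_zero hν a)
          (Eventually.of_forall fun y => le_max_right _ _)

lemma callFunction_le_of_leMM {μ ν : Measure ℝ} [IsFiniteMeasure ν]
    (hμ : Integrable (fun x => x) μ) (hν : Integrable (fun x => x) ν) (hμν : leMM μ ν) :
    callFunction μ ≤ callFunction ν := by
  obtain ⟨f, hf, rfl⟩ := hμν
  exact hf.callFunction_map_le
    ((integrable_map_measure aestronglyMeasurable_id hf.1.aemeasurable).mp hμ) hν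

lemma leMM_antisymm {μ ν : Measure ℝ} [IsProbabilityMeasure μ] [IsProbabilityMeasure ν]
    (hμ : Integrable (fun x => x) μ) (hν : Integrable (fun x => x) ν)
    (hμν : leMM μ ν) (hνμ : leMM ν μ) : μ = ν :=
  eq_of_callFunction_eq hμ hν
    (le_antisymm (callFunction_le_of_leMM hμ hν hμν) (callFunction_le_of_leMM hν hμ hνμ))

open MeasureTheory in
theorem stmt2 :
    (∀ μ : Measure ℝ, IsProbabilityMeasure μ → Integrable (fun x => x) μ → leMM μ μ) ∧
    (∀ μ ν : Measure ℝ, IsProbabilityMeasure μ → IsProbabilityMeasure ν →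
      Integrable (fun x => x) μ → Integrable (fun x => x) ν →
      leMM μ ν → leMM ν μ → μ = ν) ∧
    (∀ η μ ν : Measure ℝ, IsProbabilityMeasure η → IsProbabilityMeasure μ →
      IsProbabilityMeasure ν →
      Integrable (fun x => x) η → Integrable (fun x => x) μ → Integrable (fun x => x) ν →
      leMM η μ → leMM μ ν → leMM η ν) :=
  ⟨fun μ _ _ => leMM_refl μ,
    fun _ _ _ _ hμ hν hμν hνμ => leMM_antisymm hμ hν hμν hνμ,
    fun _ _ _ _ _ _ _ _ _ hημ hμν => leMM_trans hημ hμν⟩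
end

section
/- Let ν ∈ P(ℝ) and Y ∼ ν. Then the set {μ ∈ P(ℝ) : μ ≤_MM ν} coincides with the set of laws of E[Y | f(Y)] over all measurable functions f : ℝ → ℝ. -/
open MeasureTheory ProbabilityTheory Filter Topology

/-!
If `f` is a backward Monge martingale map for `ν`, then `f(Y)` has the defining property of
`E[Y | f(Y)]`, so the two agree `ν`-a.e. and have the same law. The only subtle point is that
`f(Y)` is integrable: on each set `{|f| ≤ n}` the map `f` is bounded, so the a.e. identity holds
for `ν` restricted there and `E|E[Y | f(Y)]| ≤ E|Y|` bounds `E[|f(Y)| ; |f| ≤ n]` by `E|Y|`. Conversely `Z = E[Y | f(Y)]` is `σ(f)`-measurable, so every `{Z ∈ A}` lies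
in `σ(f)` and the defining property of `Z` gives `E[Y ; Z ∈ A] = E[Z ; Z ∈ A]`.
-/

namespace IsBMMTMap

variable {ν : Measure ℝ} {f : ℝ → ℝ}

lemma restrict_preimage (hf : IsBMMTMap f ν) {B : Set ℝ} (hB : MeasurableSet B) :
    IsBMMTMap f (ν.restrict (f ⁻¹' B)) := by
  refine ⟨hf.1, fun A hA => ?_⟩
  rw [Measure.restrict_restrict (hf.1 hA), ← Set.preimage_inter]
  exact hf.2 (A ∩ B) (hA.inter hB)

lemma ae_eq_condExp [IsFiniteMeasure ν] (hf : IsBMMTMap f ν) (hν : Integrable (fun y => y) ν)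
    (hfi : Integrable f ν) :
    f =ᵐ[ν] ν[(fun y => y) | MeasurableSpace.comap f inferInstance] := by
  refine ae_eq_condExp_of_forall_setIntegral_eq hf.1.comap_le hν
    (fun _ _ _ => hfi.integrableOn) ?_ ?_
  · rintro s ⟨A, hA, rfl⟩ -
    exact (hf.2 A hA).symm
  · exact (Measurable.of_comap_le le_rfl).aestronglyMeasurable

lemma integrable [IsFiniteMeasure ν] (hf : IsBMMTMap f ν) (hν : Integrable (fun y => y) ν) :
    Integrable f ν := by
  let E : ℕ → Set ℝ := fun n => f ⁻¹' Set.Icc (-(n : ℝ)) n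
  have hE : AECover ν atTop E :=
    { ae_eventually_mem := ae_of_all _ fun y =>
        (tendsto_natCast_atTop_atTop.eventually_ge_atTop |f y|).mono fun _ hn => abs_le.1 hn
      measurableSet := fun _ => hf.1 measurableSet_Icc }
  have hfiE : ∀ n : ℕ, IntegrableOn f (E n) ν := fun n =>
    Measure.integrableOn_of_bounded (M := n) (measure_ne_top _ _) hf.1.aestronglyMeasurable
      ((ae_restrict_mem (hE.measurableSet n)).mono fun _ hy => abs_le.2 hy)
  refine hE.integrable_of_integral_norm_bounded (∫ y, |y| ∂ν) hfiE
    (Eventually.of_forall fun n => ?_)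
  set Z := (ν.restrict (E n))[(fun y => y) | MeasurableSpace.comap f inferInstance]
  have hfZ : f =ᵐ[ν.restrict (E n)] Z :=
    (hf.restrict_preimage measurableSet_Icc).ae_eq_condExp hν.restrict (hfiE n)
  calc ∫ y in E n, ‖f y‖ ∂ν
      = ∫ y in E n, |Z y| ∂ν :=
        integral_congr_ae (hfZ.mono fun _ hy => by simp only [Real.norm_eq_abs, hy])
    _ ≤ ∫ y in E n, |y| ∂ν := integral_abs_condExp_le _
    _ ≤ ∫ y, |y| ∂ν := setIntegral_le_integral hν.abs (ae_of_all _ fun y => abs_nonneg y)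

end IsBMMTMap

lemma isBMMTMap_condExp {ν : Measure ℝ} [IsFiniteMeasure ν] {f : ℝ → ℝ}
    (hf : Measurable f) (hν : Integrable (fun y => y) ν) :
    IsBMMTMap (ν[(fun y => y) | MeasurableSpace.comap f inferInstance]) ν := by
  have hZ : StronglyMeasurable[MeasurableSpace.comap f inferInstance]
      (ν[(fun y => y) | MeasurableSpace.comap f inferInstance]) := stronglyMeasurable_condExp
  refine ⟨hZ.measurable.mono hf.comap_le le_rfl, fun A hA => ?_⟩
  exact (setIntegral_condExp hf.comap_le hν (hZ.measurable hA)).symm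

open MeasureTheory in
theorem stmt4 (ν : Measure ℝ) [IsProbabilityMeasure ν] (hν : Integrable (fun x => x) ν) :
    {μ : Measure ℝ | leMM μ ν} =
      {μ : Measure ℝ | ∃ f : ℝ → ℝ, Measurable f ∧
        μ = ν.map (ν[(fun y => y) | MeasurableSpace.comap f inferInstance])} := by
  ext μ
  constructor
  · rintro ⟨f, hf, rfl⟩
    exact ⟨f, hf.1, Measure.map_congr (hf.ae_eq_condExp hν (hf.integrable hν))⟩
  · rintro ⟨f, hf, rfl⟩
    exact ⟨_, isBMMTMap_condExp hf hν, rfl⟩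
end

section
/- Let μ ≤_cx ν with ν atomless, and let f, g : ℝ → ℝ be strictly convex. Then for any coupling (X, Y) ∈ Π(μ, ν), E[f(E[Y|X] − X) − g(E[X|Y])] ≥ f(0) − E[g(X)], with equality if and only if (X, Y) is a backward Monge martingale transport, i.e., E[Y|X] = X almost surely and X is σ(Y)-measurable. -/
open MeasureTheory ProbabilityTheory Filter Topology

/-! Since the convex order preserves means, `E[E[Y|X] - X] = E[Y] - E[X] = 0`, and Jensen's
inequality gives `E f(E[Y|X] - X) ≥ f 0`, strictly unless `E[Y|X] = X` a.s. Conditional Jensen gives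
`E g(E[X|Y]) ≤ E g(X)`. For its equality case, apply conditional Jensen to the midpoint
`W = (X + E[X|Y]) / 2`, whose conditional expectation is again `E[X|Y]`: then
`E g(W) ≥ E g(E[X|Y]) = E g(X)`, so the nonnegative midpoint gap `(g X + g E[X|Y]) / 2 - g W`
integrates to zero and strict convexity forces `X = E[X|Y]` a.s., i.e. `X` is a.s. a measurable
function of `Y`. -/

open Set

section Convex

variable {s : Set ℝ} {g : ℝ → ℝ} {x y : ℝ}

lemma ConvexOn.map_add_div_two_le (hg : ConvexOn ℝ s g) (hx : x ∈ s) (hy : y ∈ s) :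
    g ((x + y) / 2) ≤ (g x + g y) / 2 := by
  have h := hg.2 hx hy (by norm_num : (0 : ℝ) ≤ 1 / 2) (by norm_num : (0 : ℝ) ≤ 1 / 2)
    (by norm_num)
  simp only [smul_eq_mul] at h
  calc g ((x + y) / 2) = g (1 / 2 * x + 1 / 2 * y) := by ring_nf
    _ ≤ 1 / 2 * g x + 1 / 2 * g y := h
    _ = (g x + g y) / 2 := by ring

lemma StrictConvexOn.map_add_div_two_lt (hg : StrictConvexOn ℝ s g) (hx : x ∈ s) (hy : y ∈ s)
    (hxy : x ≠ y) : g ((x + y) / 2) < (g x + g y) / 2 := by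
  have h := hg.2 hx hy hxy (by norm_num : (0 : ℝ) < 1 / 2) (by norm_num : (0 : ℝ) < 1 / 2)
    (by norm_num)
  simp only [smul_eq_mul] at h
  calc g ((x + y) / 2) = g (1 / 2 * x + 1 / 2 * y) := by ring_nf
    _ < 1 / 2 * g x + 1 / 2 * g y := h
    _ = (g x + g y) / 2 := by ring

lemma ConvexOn.add_rightDeriv_mul_sub_le (hg : ConvexOn ℝ univ g) (x y : ℝ) :
    g x + derivWithin g (Ioi x) x * (y - x) ≤ g y := by
  have hx : x ∈ interior (univ : Set ℝ) := by simp
  rcases lt_trichotomy y x with hyx | rfl | hxy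
  · have h := (hg.slope_le_leftDeriv_of_mem_interior (mem_univ y) hx hyx).trans
      (hg.leftDeriv_le_rightDeriv_of_mem_interior hx)
    rw [slope_def_field, div_le_iff₀ (sub_pos.2 hyx)] at h
    linarith
  · simp
  · have h := hg.rightDeriv_le_slope_of_mem_interior hx (mem_univ y) hxy
    rw [slope_def_field, le_div_iff₀ (sub_pos.2 hxy)] at h
    linarith

lemma ConvexOn.continuous_of_univ (hg : ConvexOn ℝ univ g) : Continuous g :=
  continuousOn_univ.mp (hg.continuousOn isOpen_univ)

end Convex

namespace ConvexOrder

lemma integral_id_eq {μ ν : Measure ℝ} (h : ConvexOrder μ ν) (hμ : Integrable id μ)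
    (hν : Integrable id ν) : ∫ x, x ∂μ = ∫ x, x ∂ν := by
  have h₁ := h id (convexOn_id convex_univ) hμ hν
  have h₂ : ∫ x, -x ∂μ ≤ ∫ x, -x ∂ν := h _ (concaveOn_id convex_univ).neg hμ.neg hν.neg
  rw [integral_neg, integral_neg] at h₂
  exact le_antisymm h₁ (neg_le_neg_iff.mp h₂)

lemma integral_eq {Ω : Type*} [MeasurableSpace Ω] {P : Measure Ω} {X Y : Ω → ℝ}
    (h : ConvexOrder (P.map X) (P.map Y)) (hX : AEMeasurable X P) (hY : AEMeasurable Y P)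
    (hXi : Integrable X P) (hYi : Integrable Y P) : ∫ ω, X ω ∂P = ∫ ω, Y ω ∂P := by
  calc ∫ ω, X ω ∂P = ∫ x, x ∂P.map X := (integral_map hX aestronglyMeasurable_id).symm
    _ = ∫ x, x ∂P.map Y := h.integral_id_eq
        ((integrable_map_measure aestronglyMeasurable_id hX).2 hXi)
        ((integrable_map_measure aestronglyMeasurable_id hY).2 hYi)
    _ = ∫ ω, Y ω ∂P := integral_map hY aestronglyMeasurable_id

end ConvexOrder

section Jensen

variable {Ω : Type*} {m m0 : MeasurableSpace Ω} {μ : Measure Ω} {g : ℝ → ℝ} {u v : Ω → ℝ}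

lemma StrictConvexOn.integral_comp_eq_map_integral_iff [IsProbabilityMeasure μ]
    (hg : StrictConvexOn ℝ univ g) (hu : Integrable u μ) (hgu : Integrable (fun ω => g (u ω)) μ) :
    ∫ ω, g (u ω) ∂μ = g (∫ ω, u ω ∂μ) ↔ u =ᵐ[μ] fun _ => ∫ ω, u ω ∂μ := by
  constructor
  · intro heq
    rcases hg.ae_eq_const_or_map_average_lt hg.convexOn.continuous_of_univ.continuousOn
      isClosed_univ (by simp) hu hgu with h | h
    · rw [average_eq_integral] at h
      exact h
    · simp only [average_eq_integral] at h
      linarith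
  · intro h
    exact (integral_congr_ae (h.fun_comp g)).trans (by simp)

lemma ConvexOn.integrable_comp_add_div_two [IsFiniteMeasure μ] (hg : ConvexOn ℝ univ g)
    (hu : Integrable u μ) (hv : Integrable v μ) (hgu : Integrable (fun ω => g (u ω)) μ)
    (hgv : Integrable (fun ω => g (v ω)) μ) : Integrable (fun ω => g ((u ω + v ω) / 2)) μ := by
  set c := derivWithin g (Ioi 0) 0
  refine integrable_of_le_of_le (g₁ := fun ω => g 0 + c * ((u ω + v ω) / 2))
    (g₂ := fun ω => (g (u ω) + g (v ω)) / 2)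
    (hg.continuous_of_univ.comp_aestronglyMeasurable ((hu.add hv).div_const 2).1)
    (ae_of_all _ fun ω => by simpa using hg.add_rightDeriv_mul_sub_le 0 ((u ω + v ω) / 2))
    (ae_of_all _ fun ω => hg.map_add_div_two_le (mem_univ _) (mem_univ _))
    ((integrable_const _).add (((hu.add hv).div_const 2).const_mul c))
    ((hgu.add hgv).div_const 2)

lemma ConvexOn.integral_comp_condExp_le (hm : m ≤ m0) [SigmaFinite (μ.trim hm)]
    (hg : ConvexOn ℝ univ g) (hu : Integrable u μ) (hgu : Integrable (fun ω => g (u ω)) μ)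
    (hgU : Integrable (fun ω => g (μ[u|m] ω)) μ) :
    ∫ ω, g (μ[u|m] ω) ∂μ ≤ ∫ ω, g (u ω) ∂μ :=
  calc ∫ ω, g (μ[u|m] ω) ∂μ ≤ ∫ ω, μ[g ∘ u|m] ω ∂μ :=
        integral_mono_ae hgU integrable_condExp
          (hg.map_condExp_le_univ hm hg.continuous_of_univ.lowerSemicontinuous hu hgu)
    _ = ∫ ω, g (u ω) ∂μ := integral_condExp hm

lemma condExp_add_condExp_div_two (hm : m ≤ m0) [SigmaFinite (μ.trim hm)]
    (hu : Integrable u μ) : μ[fun ω => (u ω + μ[u|m] ω) / 2|m] =ᵐ[μ] μ[u|m] := by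
  have hUU : μ[μ[u|m]|m] = μ[u|m] :=
    condExp_of_stronglyMeasurable hm stronglyMeasurable_condExp integrable_condExp
  have hw : (fun ω => (u ω + μ[u|m] ω) / 2) = (2⁻¹ : ℝ) • (u + μ[u|m]) := by
    ext ω
    simp only [Pi.smul_apply, Pi.add_apply, smul_eq_mul]
    ring
  rw [hw]
  filter_upwards [condExp_smul (2⁻¹ : ℝ) (u + μ[u|m]) m, condExp_add hu integrable_condExp m]
    with ω h₁ h₂
  rw [h₁, Pi.smul_apply, h₂, Pi.add_apply, hUU, smul_eq_mul]
  ring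

lemma StrictConvexOn.integral_comp_condExp_eq_iff (hm : m ≤ m0) [IsFiniteMeasure μ]
    (hg : StrictConvexOn ℝ univ g) (hu : Integrable u μ) (hgu : Integrable (fun ω => g (u ω)) μ)
    (hgU : Integrable (fun ω => g (μ[u|m] ω)) μ) :
    ∫ ω, g (μ[u|m] ω) ∂μ = ∫ ω, g (u ω) ∂μ ↔ u =ᵐ[μ] μ[u|m] := by
  refine ⟨fun heq => ?_, fun h => integral_congr_ae (h.fun_comp g).symm⟩
  set U := μ[u|m]
  have hUi : Integrable U μ := integrable_condExp
  set w : Ω → ℝ := fun ω => (u ω + U ω) / 2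
  have hwi : Integrable w μ := (hu.add hUi).div_const 2
  have hgw : Integrable (fun ω => g (w ω)) μ :=
    hg.convexOn.integrable_comp_add_div_two hu hUi hgu hgU
  have hcondw : μ[w|m] =ᵐ[μ] U := condExp_add_condExp_div_two hm hu
  have hUw : ∫ ω, g (U ω) ∂μ ≤ ∫ ω, g (w ω) ∂μ :=
    calc ∫ ω, g (U ω) ∂μ = ∫ ω, g (μ[w|m] ω) ∂μ := integral_congr_ae (hcondw.fun_comp g).symm
      _ ≤ ∫ ω, g (w ω) ∂μ := hg.convexOn.integral_comp_condExp_le hm hwi hgw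
        (hgU.congr (hcondw.fun_comp g).symm)
  set D : Ω → ℝ := fun ω => (g (u ω) + g (U ω)) / 2 - g (w ω)
  have hD : 0 ≤ D := fun ω => sub_nonneg.2 (hg.convexOn.map_add_div_two_le (mem_univ _)
    (mem_univ _))
  have hmean : Integrable (fun ω => (g (u ω) + g (U ω)) / 2) μ := (hgu.add hgU).div_const 2
  have hDi : Integrable D μ := hmean.sub hgw
  have hD0 : ∫ ω, D ω ∂μ = 0 := by
    refine le_antisymm ?_ (integral_nonneg hD)
    rw [integral_sub hmean hgw, integral_div, integral_add hgu hgU]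
    linarith
  filter_upwards [(integral_eq_zero_iff_of_nonneg hD hDi).1 hD0] with ω hω
  by_contra hne
  exact (sub_pos.2 (hg.map_add_div_two_lt (mem_univ _) (mem_univ _) hne)).ne' hω

end Jensen

lemma ae_eq_condExp_comap_iff {Ω β : Type*} [MeasurableSpace Ω] [MeasurableSpace β]
    {P : Measure Ω} [IsFiniteMeasure P] {X : Ω → ℝ} {Y : Ω → β} (hY : Measurable Y)
    (hX : Integrable X P) :
    X =ᵐ[P] P[X|MeasurableSpace.comap Y inferInstance] ↔
      ∃ h : β → ℝ, Measurable h ∧ X =ᵐ[P] fun ω => h (Y ω) := by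
  constructor
  · intro hXM
    have hM : Measurable[MeasurableSpace.comap Y inferInstance]
        (P[X|MeasurableSpace.comap Y inferInstance]) := stronglyMeasurable_condExp.measurable
    obtain ⟨h, hh, hfac⟩ := hM.exists_eq_measurable_comp
    exact ⟨h, hh, hXM.trans (EventuallyEq.of_eq hfac)⟩
  · rintro ⟨h, hh, hXh⟩
    calc X =ᵐ[P] fun ω => h (Y ω) := hXh
      _ = P[fun ω => h (Y ω)|MeasurableSpace.comap Y inferInstance] :=
        (condExp_of_stronglyMeasurable hY.comap_le
          (hh.comp (comap_measurable Y)).stronglyMeasurable (hX.congr hXh)).symm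
      _ =ᵐ[P] P[X|MeasurableSpace.comap Y inferInstance] := condExp_congr_ae hXh.symm

open MeasureTheory in
theorem stmt10_general {Ω : Type*} [m0 : MeasurableSpace Ω] (P : Measure Ω) [IsProbabilityMeasure P]
    (μ ν : Measure ℝ)
    (hcx : ConvexOrder μ ν)
    (f g : ℝ → ℝ) (hf : StrictConvexOn ℝ Set.univ f) (hg : StrictConvexOn ℝ Set.univ g)
    (X Y : Ω → ℝ) (hX : Measurable X) (hY : Measurable Y)
    (hlawX : P.map X = μ) (hlawY : P.map Y = ν)
    (hXi : Integrable X P) (hYi : Integrable Y P)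
    (h1 : Integrable (fun ω => f ((P[Y|MeasurableSpace.comap X inferInstance]) ω - X ω)) P)
    (h2 : Integrable (fun ω => g ((P[X|MeasurableSpace.comap Y inferInstance]) ω)) P)
    (h3 : Integrable (fun ω => g (X ω)) P) :
    (f 0 - ∫ ω, g (X ω) ∂P ≤
      ∫ ω, (f ((P[Y|MeasurableSpace.comap X inferInstance]) ω - X ω)
            - g ((P[X|MeasurableSpace.comap Y inferInstance]) ω)) ∂P) ∧
    ((∫ ω, (f ((P[Y|MeasurableSpace.comap X inferInstance]) ω - X ω)
            - g ((P[X|MeasurableSpace.comap Y inferInstance]) ω)) ∂P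
        = f 0 - ∫ ω, g (X ω) ∂P) ↔
      ((P[Y|MeasurableSpace.comap X inferInstance]) =ᵐ[P] X ∧
       ∃ h : ℝ → ℝ, Measurable h ∧ X =ᵐ[P] fun ω => h (Y ω))) := by
  set N := P[Y|MeasurableSpace.comap X inferInstance]
  set M := P[X|MeasurableSpace.comap Y inferInstance]
  subst hlawX hlawY
  have hZi : Integrable (fun ω => N ω - X ω) P := integrable_condExp.sub hXi
  have hZ : ∫ ω, (N ω - X ω) ∂P = 0 := by
    rw [integral_sub integrable_condExp hXi, integral_condExp hX.comap_le,
      hcx.integral_eq hX.aemeasurable hY.aemeasurable hXi hYi, sub_self]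
  have hfle : f 0 ≤ ∫ ω, f (N ω - X ω) ∂P := hZ ▸ hf.convexOn.map_integral_le
    hf.convexOn.continuous_of_univ.continuousOn isClosed_univ (by simp) hZi h1
  have hfeq := hf.integral_comp_eq_map_integral_iff hZi h1
  have hZ0 : (fun ω => N ω - X ω) =ᵐ[P] (fun _ => 0) ↔ N =ᵐ[P] X := by
    simp only [EventuallyEq, sub_eq_zero]
  rw [hZ, hZ0] at hfeq
  have hgle := hg.convexOn.integral_comp_condExp_le hY.comap_le hXi h3 h2
  rw [integral_sub h1 h2, ← hfeq, ← ae_eq_condExp_comap_iff hY hXi,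
    ← hg.integral_comp_condExp_eq_iff hY.comap_le hXi h3 h2]
  exact ⟨by linarith, fun h => ⟨by linarith, by linarith⟩, fun ⟨ha, hb⟩ => by linarith⟩

open MeasureTheory in
theorem stmt10 {Ω : Type*} [m0 : MeasurableSpace Ω] (P : Measure Ω) [IsProbabilityMeasure P]
    (μ ν : Measure ℝ) [IsProbabilityMeasure μ] [IsProbabilityMeasure ν]
    (hcx : ConvexOrder μ ν) (hatomless : ∀ y : ℝ, ν {y} = 0)
    (f g : ℝ → ℝ) (hf : StrictConvexOn ℝ Set.univ f) (hg : StrictConvexOn ℝ Set.univ g)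
    (X Y : Ω → ℝ) (hX : Measurable X) (hY : Measurable Y)
    (hlawX : P.map X = μ) (hlawY : P.map Y = ν)
    (hXi : Integrable X P) (hYi : Integrable Y P)
    (h1 : Integrable (fun ω => f ((P[Y|MeasurableSpace.comap X inferInstance]) ω - X ω)) P)
    (h2 : Integrable (fun ω => g ((P[X|MeasurableSpace.comap Y inferInstance]) ω)) P)
    (h3 : Integrable (fun ω => g (X ω)) P) :
    (f 0 - ∫ ω, g (X ω) ∂P ≤
      ∫ ω, (f ((P[Y|MeasurableSpace.comap X inferInstance]) ω - X ω)
            - g ((P[X|MeasurableSpace.comap Y inferInstance]) ω)) ∂P) ∧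
    ((∫ ω, (f ((P[Y|MeasurableSpace.comap X inferInstance]) ω - X ω)
            - g ((P[X|MeasurableSpace.comap Y inferInstance]) ω)) ∂P
        = f 0 - ∫ ω, g (X ω) ∂P) ↔
      ((P[Y|MeasurableSpace.comap X inferInstance]) =ᵐ[P] X ∧
       ∃ h : ℝ → ℝ, Measurable h ∧ X =ᵐ[P] fun ω => h (Y ω))) :=
  stmt10_general (m0 := m0) P μ ν hcx f g hf hg X Y hX hY hlawX hlawY hXi hYi h1 h2 h3
end

section
/- Fix x₀ ∈ ℝ, λ ∈ (0,1], ε > 0. Let μ₁ be a probability measure with mean x₀ supported in [x₀ − λε/6, x₀ + λε/6], and let μ₂ be the law of X₁ + εBξ where X₁ ∼ μ₁, B ∼ Bernoulli(λ), ξ uniform on {−1, +1} are independent. If μ₃, μ₄ are probability measures with mean x₀ such that μ₂ ≤_cx μ₃ and W_∞(μ₃, μ₄) ≤ λε/6, then μ₁ ≤_cx μ₄. -/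
open MeasureTheory ProbabilityTheory Filter Topology

section AuxiliaryLemmas
open MeasureTheory ProbabilityTheory Filter Topology

lemma convexOn_continuous {g : ℝ → ℝ} (hg : ConvexOn ℝ Set.univ g) : Continuous g := by
  rw [← continuousOn_univ]
  exact ConvexOn.continuousOn isOpen_univ hg

lemma convexOn_affine (a b : ℝ) : ConvexOn ℝ Set.univ (fun y : ℝ => a * y + b) := by
  refine ⟨convex_univ, ?_⟩
  intro x _ y _ p q hp hq hpq
  simp only [smul_eq_mul]
  apply le_of_eq
  linear_combination (-b) * hpq

lemma convexOn_max_const {f : ℝ → ℝ} (hf : ConvexOn ℝ Set.univ f) (M : ℝ) :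
    ConvexOn ℝ Set.univ (fun y => max (f y) M) := by
  simpa [Pi.sup_def] using hf.sup (convexOn_const M convex_univ)

lemma convexOn_hinge_pos (A : ℝ) : ConvexOn ℝ Set.univ fun y : ℝ => max (y - A) 0 := by
  have h := convexOn_max_const (convexOn_affine 1 (-A)) 0
  have he : (fun y : ℝ => max ((1:ℝ) * y + -A) 0) = fun y : ℝ => max (y - A) 0 := by
    funext y
    rw [one_mul, ← sub_eq_add_neg]
  rwa [he] at h

lemma convexOn_hinge_neg (A : ℝ) : ConvexOn ℝ Set.univ fun y : ℝ => max (A - y) 0 := by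
  have h := convexOn_max_const (convexOn_affine (-1) A) 0
  have he : (fun y : ℝ => max ((-1:ℝ) * y + A) 0) = fun y : ℝ => max (A - y) 0 := by
    funext y
    rw [show (-1:ℝ) * y + A = A - y by ring]
  rwa [he] at h

lemma chord_mono {g : ℝ → ℝ} (hg : ConvexOn ℝ Set.univ g) {a b a' b' : ℝ}
    (hab : a < b) (hab' : a' < b') (h1 : a ≤ a') (h2 : b ≤ b') :
    (g b - g a) / (b - a) ≤ (g b' - g a') / (b' - a') := by
  have t1 : (g b - g a) / (b - a) ≤ (g b' - g a) / (b' - a) :=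
    hg.secant_mono trivial trivial trivial (by linarith) (by linarith) h2
  rcases eq_or_lt_of_le h1 with rfl | h1'
  · exact t1
  have t2 : (g a - g b') / (a - b') ≤ (g a' - g b') / (a' - b') :=
    hg.secant_mono trivial trivial trivial (ne_of_lt (lt_of_lt_of_le hab h2)) (ne_of_lt hab') h1
  have e1 : (g a - g b') / (a - b') = (g b' - g a) / (b' - a) := by
    rw [← neg_div_neg_eq]; ring_nf
  have e2 : (g a' - g b') / (a' - b') = (g b' - g a') / (b' - a') := by
    rw [← neg_div_neg_eq]; ring_nf
  rw [e1, e2] at t2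
  linarith

lemma integrable_of_ae_bound {α : Type*} [MeasurableSpace α] {μ : Measure α} [IsFiniteMeasure μ]
    {f : α → ℝ} (hm : AEStronglyMeasurable f μ) {s : Set α} (hs : μ sᶜ = 0) {C : ℝ}
    (hC : ∀ x ∈ s, ‖f x‖ ≤ C) : Integrable f μ := by
  refine Integrable.mono' (integrable_const C) hm ?_
  have hae : ∀ᵐ x ∂μ, x ∈ s := by
    rw [ae_iff]; simpa [Set.compl_def] using hs
  filter_upwards [hae] with x hx using hC x hx

lemma integrable_of_support {μ : Measure ℝ} [IsFiniteMeasure μ] {a b : ℝ}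
    (hμ : μ (Set.Icc a b)ᶜ = 0) {f : ℝ → ℝ} (hf : Continuous f) : Integrable f μ := by
  obtain ⟨C, hC⟩ := isCompact_Icc.exists_bound_of_continuousOn (f := f) hf.continuousOn
  exact integrable_of_ae_bound hf.aestronglyMeasurable hμ hC

lemma integrable_dirac'' {f : ℝ → ℝ} (hf : Measurable f) (a : ℝ) :
    Integrable f (Measure.dirac a) :=
  ⟨hf.aestronglyMeasurable, by simp [HasFiniteIntegral, lintegral_dirac]⟩

lemma lower_far_right {g : ℝ → ℝ} {x h y : ℝ} (hg : ConvexOn ℝ Set.univ g)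
    (hh : 0 < h) (hy : x + h ≤ y) :
    g x + (g (x + h) - g x) / h * (y - x) ≤ g y := by
  have hs : (g (x + h) - g x) / h ≤ (g y - g x) / (y - x) := by
    rcases eq_or_lt_of_le hy with rfl | hy'
    · rw [show x + h - x = h by ring]
    · have := hg.secant_mono (a := x) (x := x + h) (y := y) trivial trivial trivial
        (by linarith) (by linarith) hy
      simpa [show x + h - x = h by ring] using this
  have hyx : (0:ℝ) < y - x := by linarith
  have h2 : (g (x + h) - g x) / h * (y - x) ≤ g y - g x := by
    rw [div_mul_eq_mul_div, div_le_iff₀ hh]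
    have := (div_le_div_iff₀ hh hyx).mp hs
    linarith
  linarith

lemma lower_far_left {g : ℝ → ℝ} {x h y : ℝ} (hg : ConvexOn ℝ Set.univ g)
    (hh : 0 < h) (hy : y ≤ x - h) :
    g x + (g x - g (x - h)) / h * (y - x) ≤ g y := by
  have hyx : y - x < 0 := by linarith
  have hs : (g y - g x) / (y - x) ≤ (g x - g (x - h)) / h := by
    have := hg.secant_mono (a := x) (x := y) (y := x - h) trivial trivial trivial
      (by linarith) (by linarith) hy
    have e : (g (x - h) - g x) / (x - h - x) = (g x - g (x - h)) / h := by
      rw [show x - h - x = -h by ring, div_neg, ← neg_div, neg_sub]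
    rw [e] at this; exact this
  have := (div_le_iff_of_neg hyx).mp hs
  linarith

lemma lower_mid_right {g : ℝ → ℝ} {x h y : ℝ} (hg : ConvexOn ℝ Set.univ g)
    (hh : 0 < h) (hy : x ≤ y) :
    g x + (g x - g (x - h)) / h * (y - x) ≤ g y := by
  rcases eq_or_lt_of_le hy with rfl | hy'
  · simp
  have hyx : (0:ℝ) < y - x := by linarith
  have hs : (g x - g (x - h)) / h ≤ (g y - g x) / (y - x) := by
    have := hg.secant_mono (a := x) (x := x - h) (y := y) trivial trivial trivial
      (by linarith) (by linarith) (by linarith)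
    have e : (g (x - h) - g x) / (x - h - x) = (g x - g (x - h)) / h := by
      rw [show x - h - x = -h by ring, div_neg, ← neg_div, neg_sub]
    rw [e] at this; exact this
  have := (le_div_iff₀ hyx).mp hs
  linarith

lemma lower_mid_left {g : ℝ → ℝ} {x h y : ℝ} (hg : ConvexOn ℝ Set.univ g)
    (hh : 0 < h) (hy : y ≤ x) :
    g x + (g (x + h) - g x) / h * (y - x) ≤ g y := by
  rcases eq_or_lt_of_le hy with rfl | hy'
  · simp
  have hyx : y - x < 0 := by linarith
  have hs : (g y - g x) / (y - x) ≤ (g (x + h) - g x) / h := by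
    have := hg.secant_mono (a := x) (x := y) (y := x + h) trivial trivial trivial
      (by linarith) (by linarith) (by linarith)
    simpa [show x + h - x = h by ring] using this
  have := (div_le_iff_of_neg hyx).mp hs
  linarith

lemma coupling_prob {μ : Measure ℝ} [IsProbabilityMeasure μ] {π : Measure (ℝ × ℝ)}
    (h : π.map Prod.fst = μ) : IsProbabilityMeasure π := by
  constructor
  have := congrArg (fun m : Measure ℝ => m Set.univ) h
  simpa [Measure.map_apply measurable_fst MeasurableSet.univ] using this

lemma integrable_fst_of_snd {μ ν : Measure ℝ} [IsProbabilityMeasure μ] [IsProbabilityMeasure ν]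
    {π : Measure (ℝ × ℝ)} (hπ1 : π.map Prod.fst = μ) (hπ2 : π.map Prod.snd = ν)
    {f G : ℝ → ℝ} (hf : Continuous f) (hG : Continuous G) (hGi : Integrable G ν) (C : ℝ)
    (hae : ∀ᵐ p ∂π, ‖f p.1‖ ≤ G p.2 + C) : Integrable f μ := by
  haveI : IsProbabilityMeasure π := coupling_prob hπ1
  have h1 : Integrable (fun p : ℝ × ℝ => G p.2) π :=
    (integrable_map_measure hG.aestronglyMeasurable measurable_snd.aemeasurable).mp
      (by rwa [hπ2])
  have h3 : Integrable (fun p : ℝ × ℝ => f p.1) π :=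
    Integrable.mono' (h1.add (integrable_const C))
      ((hf.comp continuous_fst).aestronglyMeasurable) hae
  rw [← hπ1]
  exact (integrable_map_measure hf.aestronglyMeasurable measurable_fst.aemeasurable).mpr h3

lemma integrable_snd_of_fst {μ ν : Measure ℝ} [IsProbabilityMeasure μ] [IsProbabilityMeasure ν]
    {π : Measure (ℝ × ℝ)} (hπ1 : π.map Prod.fst = μ) (hπ2 : π.map Prod.snd = ν)
    {f G : ℝ → ℝ} (hf : Continuous f) (hG : Continuous G) (hGi : Integrable G μ) (C : ℝ)
    (hae : ∀ᵐ p ∂π, ‖f p.2‖ ≤ G p.1 + C) : Integrable f ν := by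
  haveI : IsProbabilityMeasure π := coupling_prob hπ1
  have h1 : Integrable (fun p : ℝ × ℝ => G p.1) π :=
    (integrable_map_measure hG.aestronglyMeasurable measurable_fst.aemeasurable).mp
      (by rwa [hπ1])
  have h3 : Integrable (fun p : ℝ × ℝ => f p.2) π :=
    Integrable.mono' (h1.add (integrable_const C))
      ((hf.comp continuous_snd).aestronglyMeasurable) hae
  rw [← hπ2]
  exact (integrable_map_measure hf.aestronglyMeasurable measurable_snd.aemeasurable).mpr h3

lemma integrable_of_min_bounds {μ : Measure ℝ} [IsProbabilityMeasure μ] {g : ℝ → ℝ}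
    (hg : Continuous g) (hg0 : ∀ y, 0 ≤ g y) (M : ℝ)
    (hbound : ∀ n : ℕ, ∫ y, min (g y) ((n : ℝ) + 1) ∂μ ≤ M) : Integrable g μ := by
  have hmeas : ∀ n : ℕ, Measurable fun y => ENNReal.ofReal (min (g y) ((n:ℝ)+1)) := fun n =>
    ENNReal.measurable_ofReal.comp (hg.measurable.min measurable_const)
  have hmono : Monotone fun (n : ℕ) (y : ℝ) => ENNReal.ofReal (min (g y) ((n:ℝ)+1)) := by
    intro m n hmn
    intro y
    apply ENNReal.ofReal_le_ofReal
    have hc : (m:ℝ) ≤ (n:ℝ) := Nat.cast_le.mpr hmn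
    have : ((m:ℝ)+1) ≤ (n:ℝ)+1 := by linarith
    exact min_le_min (le_refl _) this
  have hsup : ∀ y, (⨆ n : ℕ, ENNReal.ofReal (min (g y) ((n:ℝ)+1))) = ENNReal.ofReal (g y) := by
    intro y
    apply le_antisymm
    · exact iSup_le fun n => ENNReal.ofReal_le_ofReal (min_le_left _ _)
    · obtain ⟨n, hn⟩ := exists_nat_ge (g y)
      refine le_trans (le_of_eq ?_) (le_iSup _ n)
      congr 1
      rw [min_eq_left (by linarith)]
  have hint : ∀ n : ℕ, Integrable (fun y => min (g y) ((n:ℝ)+1)) μ := fun n => by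
    apply (integrable_const ((n:ℝ)+1)).mono' ((hg.min continuous_const).aestronglyMeasurable)
    refine Filter.Eventually.of_forall fun y => ?_
    rw [Real.norm_eq_abs, abs_of_nonneg (le_min (hg0 y) (by positivity))]
    exact min_le_right _ _
  have hlin : ∀ n : ℕ, ∫⁻ y, ENNReal.ofReal (min (g y) ((n:ℝ)+1)) ∂μ ≤ ENNReal.ofReal M :=
    fun n => by
      rw [← ofReal_integral_eq_lintegral_ofReal (hint n)
        (Filter.Eventually.of_forall fun y => le_min (hg0 y) (by positivity))]
      exact ENNReal.ofReal_le_ofReal (hbound n)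
  have hfin : ∫⁻ y, ENNReal.ofReal (g y) ∂μ ≤ ENNReal.ofReal M := by
    calc ∫⁻ y, ENNReal.ofReal (g y) ∂μ
        = ∫⁻ y, ⨆ n : ℕ, ENNReal.ofReal (min (g y) ((n:ℝ)+1)) ∂μ :=
          lintegral_congr fun y => (hsup y).symm
      _ = ⨆ n : ℕ, ∫⁻ y, ENNReal.ofReal (min (g y) ((n:ℝ)+1)) ∂μ := lintegral_iSup hmeas hmono
      _ ≤ ENNReal.ofReal M := iSup_le hlin
  refine ⟨hg.aestronglyMeasurable, ?_⟩
  rw [HasFiniteIntegral]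
  have he : ∀ y, ‖g y‖ₑ = ENNReal.ofReal (g y) := fun y =>
    Real.enorm_eq_ofReal (hg0 y)
  calc ∫⁻ y, ‖g y‖ₑ ∂μ = ∫⁻ y, ENNReal.ofReal (g y) ∂μ :=
        lintegral_congr fun y => he y
    _ ≤ ENNReal.ofReal M := hfin
    _ < ⊤ := ENNReal.ofReal_lt_top

end AuxiliaryLemmas


section MainLemmas
open MeasureTheory ProbabilityTheory Filter Topology

lemma core {x₀ lam ε δ : ℝ} (hlam0 : 0 < lam) (hlam1 : lam ≤ 1) (hδ : 0 < δ) (hδε : δ < ε)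
    (hmargin : (1 - lam) * δ ≤ lam / 2 * (ε - δ))
    {μ₁ μ₂ μ₃ μ₄ : Measure ℝ} [IsProbabilityMeasure μ₁] [IsProbabilityMeasure μ₂]
    [IsProbabilityMeasure μ₃] [IsProbabilityMeasure μ₄]
    (hsupp : μ₁ (Set.Icc (x₀ - δ) (x₀ + δ))ᶜ = 0)
    (hsupp₂ : μ₂ (Set.Icc (x₀ - δ - ε) (x₀ + δ + ε))ᶜ = 0)
    (hrep : ∀ f : ℝ → ℝ, Continuous f →
      ∫ y, f y ∂μ₂ = lam/2 * ∫ x, f (x - ε) ∂μ₁ + lam/2 * ∫ x, f (x + ε) ∂μ₁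
        + (1 - lam) * ∫ x, f x ∂μ₁)
    (h23 : ConvexOrder μ₂ μ₃)
    {π : Measure (ℝ × ℝ)} [IsFiniteMeasure π]
    (hπ1 : π.map Prod.fst = μ₃) (hπ2 : π.map Prod.snd = μ₄)
    (hπd : ∀ᵐ p ∂π, |p.1 - p.2| ≤ δ)
    {g : ℝ → ℝ} (hg : ConvexOn ℝ Set.univ g) {K : ℝ} (hK : ∀ y, -K ≤ g y)
    (hg4 : Integrable g μ₄)
    (hc : ∀ x ∈ Set.Icc (x₀ - δ) (x₀ + δ), g x ≤ g (x + (ε - δ)))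
    (hd : ∀ x ∈ Set.Icc (x₀ - δ) (x₀ + δ), g x ≤ g (x - (ε - δ))) :
    ∫ x, g x ∂μ₁ ≤ ∫ x, g x ∂μ₄ := by
  have cg : Continuous g := convexOn_continuous hg
  set ψ : ℝ → ℝ := fun x => sInf (g '' Set.Icc (x - δ) (x + δ)) with hψdef
  have hbdd : ∀ x : ℝ, BddBelow (g '' Set.Icc (x - δ) (x + δ)) := by
    intro x
    refine ⟨-K, ?_⟩
    rintro _ ⟨y, _, rfl⟩
    exact hK y
  have hne : ∀ x : ℝ, (g '' Set.Icc (x - δ) (x + δ)).Nonempty := by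
    intro x
    exact ⟨g x, ⟨x, ⟨by linarith, by linarith⟩, rfl⟩⟩
  have hψ_le : ∀ x y : ℝ, y ∈ Set.Icc (x - δ) (x + δ) → ψ x ≤ g y := by
    intro x y hy
    exact csInf_le (hbdd x) ⟨y, hy, rfl⟩
  have hle_ψ : ∀ (x b : ℝ), (∀ y ∈ Set.Icc (x - δ) (x + δ), b ≤ g y) → b ≤ ψ x := by
    intro x b hb
    refine le_csInf (hne x) ?_
    rintro _ ⟨y, hy, rfl⟩
    exact hb y hy
  have hψK : ∀ x, -K ≤ ψ x := fun x => hle_ψ _ _ (fun y _ => hK y)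
  have hmin : ∀ x : ℝ, ∃ u ∈ Set.Icc (x - δ) (x + δ), ψ x = g u := by
    intro x
    obtain ⟨u, hu, hmin⟩ := (isCompact_Icc (a := x - δ) (b := x + δ)).exists_isMinOn
      (Set.nonempty_Icc.mpr (by linarith)) cg.continuousOn
    exact ⟨u, hu, le_antisymm (hψ_le x u hu) (hle_ψ x _ (fun y hy => isMinOn_iff.mp hmin y hy))⟩
  have hψconv : ConvexOn ℝ Set.univ ψ := by
    refine ⟨convex_univ, fun x _ y _ p q hp hq hpq => ?_⟩
    obtain ⟨u, hu, hux⟩ := hmin x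
    obtain ⟨v, hv, hvy⟩ := hmin y
    obtain ⟨hu1, hu2⟩ := hu
    obtain ⟨hv1, hv2⟩ := hv
    have hmem : p • u + q • v ∈ Set.Icc ((p • x + q • y) - δ) ((p • x + q • y) + δ) := by
      simp only [smul_eq_mul]
      constructor
      · nlinarith [mul_le_mul_of_nonneg_left hu1 hp, mul_le_mul_of_nonneg_left hv1 hq]
      · nlinarith [mul_le_mul_of_nonneg_left hu2 hp, mul_le_mul_of_nonneg_left hv2 hq]
    calc ψ (p • x + q • y) ≤ g (p • u + q • v) := hψ_le _ _ hmem
      _ ≤ p • g u + q • g v := hg.2 trivial trivial hp hq hpq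
      _ = p • ψ x + q • ψ y := by rw [hux, hvy]
  have cψ : Continuous ψ := convexOn_continuous hψconv
  -- pointwise star inequality
  have hstar : ∀ x ∈ Set.Icc (x₀ - δ) (x₀ + δ),
      g x ≤ lam/2 * ψ (x - ε) + lam/2 * ψ (x + ε) + (1 - lam) * ψ x := by
    intro x hx
    have hhpos : (0:ℝ) < ε - δ := by linarith
    set h := ε - δ with hhdef
    set c := (g (x + h) - g x) / h with hcdef
    set d := (g x - g (x - h)) / h with hddef
    have hc0 : 0 ≤ c := div_nonneg (by have := hc x hx; linarith) hhpos.le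
    have hd0 : d ≤ 0 := div_nonpos_iff.mpr (Or.inr ⟨by have := hd x hx; linarith, hhpos.le⟩)
    have b1 : g x + c * h ≤ ψ (x + ε) := by
      refine hle_ψ _ _ (fun y hy => ?_)
      obtain ⟨hy1, hy2⟩ := hy
      have hy' : x + h ≤ y := by linarith
      have l1 := lower_far_right hg hhpos hy'
      have l2 : c * h ≤ c * (y - x) := mul_le_mul_of_nonneg_left (by linarith) hc0
      linarith
    have b2 : g x - d * h ≤ ψ (x - ε) := by
      refine hle_ψ _ _ (fun y hy => ?_)
      obtain ⟨hy1, hy2⟩ := hy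
      have hy' : y ≤ x - h := by linarith
      have l1 := lower_far_left hg hhpos hy'
      have l2 : 0 ≤ (-d) * (-((y - x) + h)) :=
        mul_nonneg (neg_nonneg.2 hd0) (neg_nonneg.2 (by linarith))
      nlinarith
    have b3 : g x - (c - d) * δ ≤ ψ x := by
      refine hle_ψ _ _ (fun y hy => ?_)
      obtain ⟨hy1, hy2⟩ := hy
      rcases le_total y x with hxy | hxy
      · have l1 := lower_mid_left hg hhpos hxy
        have l2 : c * (-δ) ≤ c * (y - x) := mul_le_mul_of_nonneg_left (by linarith) hc0
        have l3 : 0 ≤ (-d) * δ := mul_nonneg (by linarith) hδ.le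
        nlinarith
      · have l1 := lower_mid_right hg hhpos hxy
        have l2 : d * δ ≤ d * (y - x) := mul_le_mul_of_nonpos_left (by linarith) hd0
        have l3 : 0 ≤ c * δ := mul_nonneg hc0 hδ.le
        nlinarith
    have hcd : 0 ≤ c - d := by linarith
    have e1 : lam/2 * (g x + c * h) ≤ lam/2 * ψ (x + ε) :=
      mul_le_mul_of_nonneg_left b1 (by linarith)
    have e2 : lam/2 * (g x - d * h) ≤ lam/2 * ψ (x - ε) :=
      mul_le_mul_of_nonneg_left b2 (by linarith)
    have e3 : (1 - lam) * (g x - (c - d) * δ) ≤ (1 - lam) * ψ x :=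
      mul_le_mul_of_nonneg_left b3 (by linarith)
    have m2 : (c - d) * ((1 - lam) * δ) ≤ (c - d) * (lam/2 * h) :=
      mul_le_mul_of_nonneg_left (by linarith) hcd
    nlinarith [e1, e2, e3, m2]
  -- integrability infrastructure
  have hgsnd : Integrable (fun p : ℝ × ℝ => g p.2) π :=
    (integrable_map_measure cg.aestronglyMeasurable measurable_snd.aemeasurable).mp
      (by rwa [hπ2])
  have habs : ∀ᵐ p ∂π, p.2 ∈ Set.Icc (p.1 - δ) (p.1 + δ) := by
    filter_upwards [hπd] with p hp
    have := abs_le.mp hp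
    exact ⟨by linarith [this.2], by linarith [this.1]⟩
  have hψfst_le : ∀ᵐ p ∂π, ψ p.1 ≤ g p.2 := by
    filter_upwards [habs] with p hp using hψ_le _ _ hp
  have hψfst : Integrable (fun p : ℝ × ℝ => ψ p.1) π := by
    have hdom : Integrable (fun p : ℝ × ℝ => ‖g p.2‖ + |K|) π :=
      hgsnd.norm.add (integrable_const _)
    refine Integrable.mono' hdom ((cψ.comp continuous_fst).aestronglyMeasurable) ?_
    filter_upwards [hψfst_le] with p hp
    have h1 := hψK p.1
    rw [Real.norm_eq_abs]
    rcases le_total 0 (ψ p.1) with h | h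
    · rw [abs_of_nonneg h]
      have := le_abs_self (g p.2)
      have := abs_nonneg K
      rw [Real.norm_eq_abs]
      linarith
    · rw [abs_of_nonpos h]
      have := le_abs_self K
      have := abs_nonneg (g p.2)
      rw [Real.norm_eq_abs]
      linarith
  have hψ3 : Integrable ψ μ₃ := by
    rw [← hπ1]
    exact (integrable_map_measure cψ.aestronglyMeasurable measurable_fst.aemeasurable).mpr hψfst
  have hψ2 : Integrable ψ μ₂ := integrable_of_support hsupp₂ cψ
  have s1 : ∫ x, ψ x ∂μ₂ ≤ ∫ x, ψ x ∂μ₃ := h23 ψ hψconv hψ2 hψ3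
  have s2 : ∫ x, ψ x ∂μ₃ ≤ ∫ x, g x ∂μ₄ := by
    rw [← hπ1, ← hπ2, integral_map measurable_fst.aemeasurable cψ.aestronglyMeasurable,
      integral_map measurable_snd.aemeasurable cg.aestronglyMeasurable]
    exact integral_mono_ae hψfst hgsnd hψfst_le
  have s3 : ∫ x, g x ∂μ₁ ≤ ∫ x, ψ x ∂μ₂ := by
    rw [hrep ψ cψ]
    have i1 : Integrable (fun x => ψ (x - ε)) μ₁ :=
      integrable_of_support hsupp (cψ.comp (continuous_id.sub continuous_const))
    have i2 : Integrable (fun x => ψ (x + ε)) μ₁ :=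
      integrable_of_support hsupp (cψ.comp (continuous_id.add continuous_const))
    have i3 : Integrable ψ μ₁ := integrable_of_support hsupp cψ
    have hTi : Integrable (fun x => lam/2 * ψ (x - ε) + lam/2 * ψ (x + ε) + (1 - lam) * ψ x) μ₁ :=
      ((i1.const_mul _).add (i2.const_mul _)).add (i3.const_mul _)
    have hae1 : ∀ᵐ x ∂μ₁, x ∈ Set.Icc (x₀ - δ) (x₀ + δ) := by
      rw [ae_iff]
      simpa [Set.compl_def] using hsupp
    have hmono : ∀ᵐ x ∂μ₁,
        g x ≤ lam/2 * ψ (x - ε) + lam/2 * ψ (x + ε) + (1 - lam) * ψ x := by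
      filter_upwards [hae1] with x hx using hstar x hx
    calc ∫ x, g x ∂μ₁ ≤ ∫ x, (lam/2 * ψ (x - ε) + lam/2 * ψ (x + ε) + (1 - lam) * ψ x) ∂μ₁ :=
          integral_mono_ae (integrable_of_support hsupp cg) hTi hmono
      _ = lam/2 * ∫ x, ψ (x - ε) ∂μ₁ + lam/2 * ∫ x, ψ (x + ε) ∂μ₁ + (1 - lam) * ∫ x, ψ x ∂μ₁ := by
          have A1 : ∫ x, (lam/2 * ψ (x - ε) + lam/2 * ψ (x + ε) + (1 - lam) * ψ x) ∂μ₁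
              = ∫ x, (lam/2 * ψ (x - ε) + lam/2 * ψ (x + ε)) ∂μ₁ + ∫ x, (1 - lam) * ψ x ∂μ₁ :=
            integral_add ((i1.const_mul _).add (i2.const_mul _)) (i3.const_mul _)
          have A2 : ∫ x, (lam/2 * ψ (x - ε) + lam/2 * ψ (x + ε)) ∂μ₁
              = ∫ x, lam/2 * ψ (x - ε) ∂μ₁ + ∫ x, lam/2 * ψ (x + ε) ∂μ₁ :=
            integral_add (i1.const_mul _) (i2.const_mul _)
          rw [A1, A2, integral_const_mul, integral_const_mul, integral_const_mul]
  linarith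


theorem rep_lemma {Ω : Type*} [mΩ : MeasurableSpace Ω] (P : Measure Ω) [IsProbabilityMeasure P]
    (x₀ lam ε δ : ℝ) (X₁ B ξ : Ω → ℝ) (hX₁ : Measurable X₁) (hB : Measurable B)
    (hξ : Measurable ξ)
    (hlam0 : 0 < lam) (hlam1 : lam ≤ 1) (hδ : 0 < δ) (hε : 0 < ε)
    (hindep1 : IndepFun X₁ (fun ω => (B ω, ξ ω)) P) (hindep2 : IndepFun B ξ P)
    (μ₁ μ₂ : Measure ℝ)
    (hμ₁ : P.map X₁ = μ₁)
    (hsupp : μ₁ (Set.Icc (x₀ - δ) (x₀ + δ))ᶜ = 0)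
    (hBlaw : P.map B =
      ENNReal.ofReal lam • Measure.dirac (1:ℝ) + ENNReal.ofReal (1 - lam) • Measure.dirac 0)
    (hξlaw : P.map ξ =
      (1/2 : ENNReal) • Measure.dirac (-1:ℝ) + (1/2 : ENNReal) • Measure.dirac 1)
    (hμ₂ : P.map (fun ω => X₁ ω + ε * B ω * ξ ω) = μ₂) :
    (μ₂ (Set.Icc (x₀ - δ - ε) (x₀ + δ + ε))ᶜ = 0) ∧
    ∀ f : ℝ → ℝ, Continuous f →
      ∫ y, f y ∂μ₂ = lam/2 * ∫ x, f (x - ε) ∂μ₁ + lam/2 * ∫ x, f (x + ε) ∂μ₁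
        + (1 - lam) * ∫ x, f x ∂μ₁ := by
  have hμ₁prob : IsProbabilityMeasure μ₁ := hμ₁ ▸ Measure.isProbabilityMeasure_map hX₁.aemeasurable
  set N : Ω → ℝ := fun ω => ε * B ω * ξ ω with hNdef
  have hN : Measurable N := (hB.const_mul ε).mul hξ
  set νN : Measure ℝ := P.map N with hνNdef
  have hνNprob : IsProbabilityMeasure νN := Measure.isProbabilityMeasure_map hN.aemeasurable
  have hXN : IndepFun X₁ N P := by
    have hm : Measurable (fun p : ℝ × ℝ => ε * p.1 * p.2) :=
      (measurable_fst.const_mul ε).mul measurable_snd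
    exact hindep1.comp measurable_id hm
  have hpair : P.map (fun ω => (X₁ ω, N ω)) = μ₁.prod νN := by
    rw [← hμ₁, hνNdef]
    exact (indepFun_iff_map_prod_eq_prod_map_map hX₁.aemeasurable hN.aemeasurable).mp hXN
  have aeB : ∀ᵐ ω ∂P, B ω = 0 ∨ B ω = 1 := by
    have hmeas : MeasurableSet ({0, 1} : Set ℝ) := by measurability
    have h0 : P.map B ({0, 1} : Set ℝ)ᶜ = 0 := by
      rw [hBlaw]
      simp [Measure.dirac_apply' _ hmeas.compl]
    rw [Measure.map_apply hB hmeas.compl] at h0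
    rw [ae_iff]
    convert h0 using 2 <;> ext <;> simp
  have aeξ : ∀ᵐ ω ∂P, ξ ω = -1 ∨ ξ ω = 1 := by
    have hmeas : MeasurableSet ({-1, 1} : Set ℝ) := by measurability
    have h0 : P.map ξ ({-1, 1} : Set ℝ)ᶜ = 0 := by
      rw [hξlaw]
      simp [Measure.dirac_apply' _ hmeas.compl]
    rw [Measure.map_apply hξ hmeas.compl] at h0
    rw [ae_iff]
    convert h0 using 2 <;> ext <;> simp
  have aeN : ∀ᵐ ω ∂P, N ω ∈ Set.Icc (-ε) ε := by
    filter_upwards [aeB, aeξ] with ω hb hs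
    have hval : N ω = ε * B ω * ξ ω := rfl
    rcases hb with hb | hb <;> rcases hs with hs | hs <;>
      rw [Set.mem_Icc, hval, hb, hs] <;> constructor <;> nlinarith
  have aeX : ∀ᵐ ω ∂P, X₁ ω ∈ Set.Icc (x₀ - δ) (x₀ + δ) := by
    have h0 : P (X₁ ⁻¹' (Set.Icc (x₀ - δ) (x₀ + δ))ᶜ) = 0 := by
      rw [← Measure.map_apply hX₁ measurableSet_Icc.compl, hμ₁]
      exact hsupp
    rw [ae_iff]
    convert h0 using 2 <;> ext <;> simp
  have hνNsupp : νN (Set.Icc (-ε) ε)ᶜ = 0 := by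
    rw [hνNdef, Measure.map_apply hN measurableSet_Icc.compl]
    rw [ae_iff] at aeN
    convert aeN using 2 <;> ext <;> simp
  constructor
  · rw [← hμ₂, Measure.map_apply (f := fun ω => X₁ ω + N ω) (hX₁.add hN) measurableSet_Icc.compl]
    have haeS : ∀ᵐ ω ∂P, X₁ ω + N ω ∈ Set.Icc (x₀ - δ - ε) (x₀ + δ + ε) := by
      filter_upwards [aeX, aeN] with ω h1 h2
      obtain ⟨a1, a2⟩ := h1; obtain ⟨b1, b2⟩ := h2
      exact ⟨by linarith, by linarith⟩
    rw [ae_iff] at haeS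
    convert haeS using 2 <;> ext <;> simp
  · intro f hf
    have hνBprob : IsProbabilityMeasure (P.map B) := Measure.isProbabilityMeasure_map hB.aemeasurable
    have hνξprob : IsProbabilityMeasure (P.map ξ) := Measure.isProbabilityMeasure_map hξ.aemeasurable
    have hpairBS : P.map (fun ω => (B ω, ξ ω)) = (P.map B).prod (P.map ξ) :=
      (indepFun_iff_map_prod_eq_prod_map_map hB.aemeasurable hξ.aemeasurable).mp hindep2
    have hBIcc : (P.map B) (Set.Icc (0:ℝ) 1)ᶜ = 0 := by
      rw [hBlaw]
      simp [Measure.dirac_apply' _ (measurableSet_Icc (a := (0:ℝ)) (b := 1)).compl]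
    have hξIcc : (P.map ξ) (Set.Icc (-1:ℝ) 1)ᶜ = 0 := by
      rw [hξlaw]
      simp [Measure.dirac_apply' _ (measurableSet_Icc (a := (-1:ℝ)) (b := 1)).compl]
    have hrect : ((P.map B).prod (P.map ξ)) ((Set.Icc (0:ℝ) 1 ×ˢ Set.Icc (-1:ℝ) 1))ᶜ = 0 := by
      have hsub : ((Set.Icc (0:ℝ) 1 ×ˢ Set.Icc (-1:ℝ) 1))ᶜ ⊆
          ((Set.Icc (0:ℝ) 1)ᶜ ×ˢ (Set.univ : Set ℝ)) ∪
            ((Set.univ : Set ℝ) ×ˢ (Set.Icc (-1:ℝ) 1)ᶜ) := by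
        rintro ⟨b, s⟩ hp
        rw [Set.mem_compl_iff, Set.mem_prod] at hp
        rcases not_and_or.mp hp with h | h
        · exact Set.mem_union_left _ (Set.mem_prod.mpr ⟨h, Set.mem_univ _⟩)
        · exact Set.mem_union_right _ (Set.mem_prod.mpr ⟨Set.mem_univ _, h⟩)
      refine measure_mono_null hsub ?_
      apply le_antisymm _ (by positivity)
      refine le_trans (measure_union_le _ _) ?_
      rw [Measure.prod_prod, Measure.prod_prod, hBIcc, hξIcc]
      simp
    -- inner over ξ
    have hinner_ξ : ∀ b x' : ℝ, ∫ s, f (x' + ε * b * s) ∂(P.map ξ)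
        = 1/2 * f (x' - ε * b) + 1/2 * f (x' + ε * b) := by
      intro b x'
      have hcont : Continuous fun s : ℝ => f (x' + ε * b * s) := by
        exact hf.comp (continuous_const.add (continuous_const.mul continuous_id))
      rw [hξlaw,
        integral_add_measure ((integrable_dirac'' hcont.measurable _).smul_measure (by simp))
          ((integrable_dirac'' hcont.measurable _).smul_measure (by simp)),
        integral_smul_measure, integral_smul_measure, integral_dirac, integral_dirac]
      have ht : ((1 : ENNReal)/2).toReal = (1/2 : ℝ) := by simp
      rw [ht, smul_eq_mul, smul_eq_mul,
        show x' + ε * b * (-1) = x' - ε * b by ring, show x' + ε * b * 1 = x' + ε * b by ring]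
    -- inner over B
    have hinner_B : ∀ x' : ℝ, ∫ b, (1/2 * f (x' - ε * b) + 1/2 * f (x' + ε * b)) ∂(P.map B)
        = lam/2 * f (x' - ε) + lam/2 * f (x' + ε) + (1 - lam) * f x' := by
      intro x'
      have hcont : Continuous fun b : ℝ => 1/2 * f (x' - ε * b) + 1/2 * f (x' + ε * b) := by
        exact ((continuous_const.mul (hf.comp (continuous_const.sub
          (continuous_const.mul continuous_id)))).add
          (continuous_const.mul (hf.comp (continuous_const.add
          (continuous_const.mul continuous_id)))))
      rw [hBlaw,
        integral_add_measure ((integrable_dirac'' hcont.measurable _).smul_measure (by simp))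
          ((integrable_dirac'' hcont.measurable _).smul_measure (by simp)),
        integral_smul_measure, integral_smul_measure, integral_dirac, integral_dirac]
      rw [smul_eq_mul, smul_eq_mul, ENNReal.toReal_ofReal hlam0.le,
        ENNReal.toReal_ofReal (by linarith),
        show x' - ε * 1 = x' - ε by ring, show x' + ε * 1 = x' + ε by ring,
        show x' - ε * 0 = x' by ring, show x' + ε * 0 = x' by ring]
      ring
    -- inner over νN
    have J1 : ∀ x' : ℝ, ∫ n, f (x' + n) ∂νN
        = lam/2 * f (x' - ε) + lam/2 * f (x' + ε) + (1 - lam) * f x' := by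
      intro x'
      have hcont2 : Continuous fun p : ℝ × ℝ => f (x' + ε * p.1 * p.2) := by
        exact hf.comp (continuous_const.add ((continuous_const.mul continuous_fst).mul
          continuous_snd))
      have e1 : ∫ n, f (x' + n) ∂νN = ∫ ω, f (x' + N ω) ∂P := by
        rw [hνNdef]
        exact integral_map hN.aemeasurable
          (hf.comp (continuous_const.add continuous_id)).aestronglyMeasurable
      have e2 : ∫ (p : ℝ × ℝ), f (x' + ε * p.1 * p.2) ∂((P.map B).prod (P.map ξ))
          = ∫ ω, f (x' + N ω) ∂P := by
        rw [← hpairBS, integral_map (hB.prodMk hξ).aemeasurable hcont2.aestronglyMeasurable]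
      obtain ⟨C, hC⟩ := (isCompact_Icc (a := x' - ε) (b := x' + ε)).exists_bound_of_continuousOn
        (f := f) hf.continuousOn
      have hintp : Integrable (fun p : ℝ × ℝ => f (x' + ε * p.1 * p.2))
          ((P.map B).prod (P.map ξ)) := by
        refine integrable_of_ae_bound hcont2.aestronglyMeasurable hrect (C := C) ?_
        rintro ⟨b, s⟩ ⟨hb, hs⟩
        simp only [Set.mem_Icc] at hb hs
        have h1 : 0 ≤ b * (s + 1) := mul_nonneg hb.1 (by linarith [hs.1])
        have h2 : 0 ≤ b * (1 - s) := mul_nonneg hb.1 (by linarith [hs.2])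
        have h3 : -1 ≤ b * s := by nlinarith [hb.2]
        have h4 : b * s ≤ 1 := by nlinarith [hb.2]
        refine hC _ ⟨?_, ?_⟩
        · show x' - ε ≤ x' + ε * b * s
          nlinarith [mul_nonneg hε.le (show (0:ℝ) ≤ 1 + b * s by linarith)]
        · show x' + ε * b * s ≤ x' + ε
          nlinarith [mul_nonneg hε.le (show (0:ℝ) ≤ 1 - b * s by linarith)]
      have e3 : ∫ n, f (x' + n) ∂νN
          = ∫ b, ∫ s, f (x' + ε * b * s) ∂(P.map ξ) ∂(P.map B) := by
        rw [e1, ← e2]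
        exact integral_prod _ hintp
      rw [e3]
      simp only [hinner_ξ]
      exact hinner_B x'
    -- outer step
    have hcontsum : Continuous fun p : ℝ × ℝ => f (p.1 + p.2) :=
      hf.comp (continuous_fst.add continuous_snd)
    have hprodsupp : (μ₁.prod νN)
        ((Set.Icc (x₀ - δ) (x₀ + δ) ×ˢ Set.Icc (-ε) ε))ᶜ = 0 := by
      have hsub : ((Set.Icc (x₀ - δ) (x₀ + δ) ×ˢ Set.Icc (-ε) ε))ᶜ ⊆
          ((Set.Icc (x₀ - δ) (x₀ + δ))ᶜ ×ˢ (Set.univ : Set ℝ)) ∪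
            ((Set.univ : Set ℝ) ×ˢ (Set.Icc (-ε) ε)ᶜ) := by
        rintro ⟨x, n⟩ hp
        rw [Set.mem_compl_iff, Set.mem_prod] at hp
        rcases not_and_or.mp hp with h | h
        · exact Set.mem_union_left _ (Set.mem_prod.mpr ⟨h, Set.mem_univ _⟩)
        · exact Set.mem_union_right _ (Set.mem_prod.mpr ⟨Set.mem_univ _, h⟩)
      refine measure_mono_null hsub ?_
      apply le_antisymm _ (by positivity)
      refine le_trans (measure_union_le _ _) ?_
      rw [Measure.prod_prod, Measure.prod_prod, hsupp, hνNsupp]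
      simp
    have hint2 : Integrable (fun p : ℝ × ℝ => f (p.1 + p.2)) (μ₁.prod νN) := by
      obtain ⟨C, hC⟩ := (isCompact_Icc (a := x₀ - δ - ε)
        (b := x₀ + δ + ε)).exists_bound_of_continuousOn (f := f) hf.continuousOn
      refine integrable_of_ae_bound hcontsum.aestronglyMeasurable hprodsupp (C := C) ?_
      rintro ⟨x, n⟩ ⟨hx, hn⟩
      simp only [Set.mem_Icc] at hx hn
      exact hC _ ⟨by linarith [hx.1, hn.1], by linarith [hx.2, hn.2]⟩
    have e4 : ∫ y, f y ∂μ₂ = ∫ p, f (p.1 + p.2) ∂(μ₁.prod νN) := by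
      rw [← hμ₂,
        show (fun ω => X₁ ω + ε * B ω * ξ ω)
          = (fun p : ℝ × ℝ => p.1 + p.2) ∘ (fun ω => (X₁ ω, N ω)) from rfl,
        ← Measure.map_map (g := fun p : ℝ × ℝ => p.1 + p.2) (measurable_fst.add measurable_snd) (hX₁.prodMk hN), hpair,
        integral_map (φ := fun p : ℝ × ℝ => p.1 + p.2) (measurable_fst.add measurable_snd).aemeasurable hf.aestronglyMeasurable]
    rw [e4, integral_prod _ hint2]
    simp only [J1]
    have i1 : Integrable (fun x => f (x - ε)) μ₁ :=
      integrable_of_support hsupp (hf.comp (continuous_id.sub continuous_const))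
    have i2 : Integrable (fun x => f (x + ε)) μ₁ :=
      integrable_of_support hsupp (hf.comp (continuous_id.add continuous_const))
    have i3 : Integrable f μ₁ := integrable_of_support hsupp hf
    have A1 : ∫ x, (lam/2 * f (x - ε) + lam/2 * f (x + ε) + (1 - lam) * f x) ∂μ₁
        = ∫ x, (lam/2 * f (x - ε) + lam/2 * f (x + ε)) ∂μ₁ + ∫ x, (1 - lam) * f x ∂μ₁ :=
      integral_add ((i1.const_mul _).add (i2.const_mul _)) (i3.const_mul _)
    have A2 : ∫ x, (lam/2 * f (x - ε) + lam/2 * f (x + ε)) ∂μ₁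
        = ∫ x, lam/2 * f (x - ε) ∂μ₁ + ∫ x, lam/2 * f (x + ε) ∂μ₁ :=
      integral_add (i1.const_mul _) (i2.const_mul _)
    rw [A1, A2, integral_const_mul, integral_const_mul, integral_const_mul]

end MainLemmas

set_option maxHeartbeats 2000000 in
open MeasureTheory ProbabilityTheory in
theorem stmt13 (x₀ lam ε : ℝ) (hlam : lam ∈ Set.Ioc (0:ℝ) 1) (hε : 0 < ε)
    {Ω : Type*} [mΩ : MeasurableSpace Ω] (P : Measure Ω) [IsProbabilityMeasure P]
    (X₁ B ξ : Ω → ℝ) (hX₁ : Measurable X₁) (hB : Measurable B) (hξ : Measurable ξ)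
    (hindep1 : IndepFun X₁ (fun ω => (B ω, ξ ω)) P) (hindep2 : IndepFun B ξ P)
    (μ₁ μ₂ μ₃ μ₄ : Measure ℝ) [IsProbabilityMeasure μ₃] [IsProbabilityMeasure μ₄]
    (hμ₁ : P.map X₁ = μ₁)
    (hmean₁ : ∫ x, x ∂μ₁ = x₀)
    (hsupp : μ₁ (Set.Icc (x₀ - lam * ε / 6) (x₀ + lam * ε / 6))ᶜ = 0)
    (hBlaw : P.map B =
      ENNReal.ofReal lam • Measure.dirac (1:ℝ) + ENNReal.ofReal (1 - lam) • Measure.dirac 0)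
    (hξlaw : P.map ξ =
      (1/2 : ENNReal) • Measure.dirac (-1:ℝ) + (1/2 : ENNReal) • Measure.dirac 1)
    (hμ₂ : P.map (fun ω => X₁ ω + ε * B ω * ξ ω) = μ₂)
    (hmean₃ : ∫ x, x ∂μ₃ = x₀) (hmean₄ : ∫ x, x ∂μ₄ = x₀)
    (h23 : ConvexOrder μ₂ μ₃)
    (hW : ∃ π : Measure (ℝ × ℝ), IsCoupling π μ₃ μ₄ ∧
      ∀ᵐ p ∂π, |p.1 - p.2| ≤ lam * ε / 6) :
    ConvexOrder μ₁ μ₄ := by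
  obtain ⟨hlam0, hlam1⟩ := hlam
  set d : ℝ := lam * ε / 6 with hddef
  have hδ : 0 < d := by rw [hddef]; positivity
  have hδε : d < ε := by rw [hddef]; nlinarith
  have hmargin : (1 - lam) * d ≤ lam / 2 * (ε - d) := by rw [hddef]; nlinarith
  have h3d : 3 * d ≤ ε := by rw [hddef]; nlinarith
  haveI hμ₁prob : IsProbabilityMeasure μ₁ := hμ₁ ▸ Measure.isProbabilityMeasure_map hX₁.aemeasurable
  haveI hμ₂prob : IsProbabilityMeasure μ₂ :=
    hμ₂ ▸ Measure.isProbabilityMeasure_map (hX₁.add ((hB.const_mul ε).mul hξ)).aemeasurable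
  obtain ⟨hsupp₂, hrep⟩ := rep_lemma P x₀ lam ε d X₁ B ξ hX₁ hB hξ hlam0 hlam1 hδ hε
    hindep1 hindep2 μ₁ μ₂ hμ₁ hsupp hBlaw hξlaw hμ₂
  obtain ⟨π, ⟨hπ1, hπ2⟩, hπd⟩ := hW
  haveI hπprob : IsProbabilityMeasure π := coupling_prob hπ1
  have hid1 : Integrable (fun y : ℝ => y) μ₁ := integrable_of_support hsupp continuous_id'
  have hid2 : Integrable (fun y : ℝ => y) μ₂ := integrable_of_support hsupp₂ continuous_id'
  have hmean₂ : ∫ y, y ∂μ₂ = x₀ := by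
    rw [hrep _ continuous_id']
    have e1 : ∫ x, (x - ε) ∂μ₁ = x₀ - ε := by
      rw [integral_sub hid1 (integrable_const ε), hmean₁, integral_const]
      simp
    have e2 : ∫ x, (x + ε) ∂μ₁ = x₀ + ε := by
      rw [integral_add hid1 (integrable_const ε), hmean₁, integral_const]
      simp
    rw [e1, e2, hmean₁]; ring
  have hπab : ∀ᵐ p ∂π, p.1 - d ≤ p.2 ∧ p.2 ≤ p.1 + d := by
    filter_upwards [hπd] with p hp
    have := abs_le.mp hp
    exact ⟨by linarith [this.2], by linarith [this.1]⟩
  have hae2 : ∀ᵐ y ∂μ₂, y ∈ Set.Icc (x₀ - d - ε) (x₀ + d + ε) := by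
    rw [ae_iff]; simpa [Set.compl_def] using hsupp₂
  intro φ hφ hφ1 hφ4
  by_cases hid4 : Integrable (fun y : ℝ => y) μ₄
  · -- Case A : identity integrable w.r.t. μ₄
    set s : ℝ := (φ (x₀ - d + (ε - d)) - φ (x₀ - d)) / (ε - d) with hsdef
    have hh : (0:ℝ) < ε - d := by linarith
    set φt : ℝ → ℝ := fun y => φ y + (-s * y + s * x₀) with hφtdef
    have hφtconv : ConvexOn ℝ Set.univ φt := hφ.add (convexOn_affine (-s) (s * x₀))
    have cφt : Continuous φt := convexOn_continuous hφtconv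
    have haff4 : Integrable (fun y : ℝ => -s * y + s * x₀) μ₄ :=
      (hid4.const_mul (-s)).add (integrable_const _)
    have hφt4 : Integrable φt μ₄ := hφ4.add haff4
    have haff1 : Integrable (fun y : ℝ => -s * y + s * x₀) μ₁ :=
      (hid1.const_mul (-s)).add (integrable_const _)
    have hφt1 : Integrable φt μ₁ := hφ1.add haff1
    have hshift4 : ∫ y, φt y ∂μ₄ = ∫ y, φ y ∂μ₄ := by
      rw [hφtdef]
      rw [integral_add hφ4 haff4, integral_add (hid4.const_mul (-s)) (integrable_const _),
        integral_const_mul, hmean₄, integral_const]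
      simp [measure_univ]
    have hshift1 : ∫ y, φt y ∂μ₁ = ∫ y, φ y ∂μ₁ := by
      rw [hφtdef]
      rw [integral_add hφ1 haff1, integral_add (hid1.const_mul (-s)) (integrable_const _),
        integral_const_mul, hmean₁, integral_const]
      simp [measure_univ]
    obtain ⟨K₀, hK₀⟩ := (isCompact_Icc (a := x₀ - d - ε)
      (b := x₀ + d + ε)).exists_bound_of_continuousOn (f := φt) cφt.continuousOn
    have hK₀0 : 0 ≤ K₀ := le_trans (norm_nonneg (φt x₀)) (hK₀ x₀ ⟨by linarith, by linarith⟩)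
    have hslope_c : ∀ x ∈ Set.Icc (x₀ - d) (x₀ + d), φt x ≤ φt (x + (ε - d)) := by
      intro x hx
      have hch := chord_mono hφ (a := x₀ - d) (b := x₀ - d + (ε - d)) (a' := x)
        (b' := x + (ε - d)) (by linarith) (by linarith) hx.1 (by linarith [hx.1])
      rw [show x₀ - d + (ε - d) - (x₀ - d) = ε - d by ring,
        show x + (ε - d) - x = ε - d by ring] at hch
      rw [← hsdef] at hch
      have hm := (le_div_iff₀ hh).mp hch
      simp only [hφtdef]
      nlinarith [hm]
    have hslope_d : ∀ x ∈ Set.Icc (x₀ - d) (x₀ + d), φt x ≤ φt (x - (ε - d)) := by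
      intro x hx
      have h1 := chord_mono hφ (a := x - (ε - d)) (b := x) (a' := x₀ + d - (ε - d))
        (b' := x₀ + d) (by linarith) (by linarith) (by linarith [hx.2]) hx.2
      have h2 := chord_mono hφ (a := x₀ + d - (ε - d)) (b := x₀ + d) (a' := x₀ - d)
        (b' := x₀ - d + (ε - d)) (by linarith) (by linarith) (by linarith [h3d])
        (by linarith [h3d])
      rw [show x - (x - (ε - d)) = ε - d by ring,
        show x₀ + d - (x₀ + d - (ε - d)) = ε - d by ring] at h1
      rw [show x₀ + d - (x₀ + d - (ε - d)) = ε - d by ring,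
        show x₀ - d + (ε - d) - (x₀ - d) = ε - d by ring] at h2
      rw [← hsdef] at h2
      have hch : (φ x - φ (x - (ε - d))) / (ε - d) ≤ s := le_trans h1 h2
      have hm := (div_le_iff₀ hh).mp hch
      simp only [hφtdef]
      nlinarith [hm]
    have key : ∀ n : ℕ, ∫ y, φt y ∂μ₁ ≤ ∫ y, max (φt y) (-(K₀ + n)) ∂μ₄ := by
      intro n
      have hM0 : (0:ℝ) ≤ K₀ + n := by positivity
      have hgnconv := convexOn_max_const hφtconv (-(K₀ + n))
      have hgnK : ∀ y, -(K₀ + (n:ℝ)) ≤ max (φt y) (-(K₀ + n)) := fun y => le_max_right _ _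
      have hgn4 : Integrable (fun y => max (φt y) (-(K₀ + n))) μ₄ := by
        refine Integrable.mono' (hφt4.norm.add (integrable_const (K₀ + n)))
          ((cφt.max continuous_const).aestronglyMeasurable)
          (Filter.Eventually.of_forall fun y => ?_)
        simp only [Pi.add_apply]
        rw [Real.norm_eq_abs]
        rcases le_total (-(K₀ + (n:ℝ))) (φt y) with hy | hy
        · rw [max_eq_left hy, ← Real.norm_eq_abs]
          have := (Nat.cast_nonneg n : (0:ℝ) ≤ (n:ℝ))
          linarith
        · rw [max_eq_right hy]
          have h1 : |(-(K₀ + (n:ℝ)))| = K₀ + n := by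
            rw [abs_of_nonpos (by linarith [hK₀0, (Nat.cast_nonneg n : (0:ℝ) ≤ (n:ℝ))])]; ring
          rw [h1]
          have h2 : K₀ + (n:ℝ) ≤ ‖φt y‖ := by
            rw [Real.norm_eq_abs]
            linarith [neg_abs_le (φt y)]
          linarith
      have hgneq : ∀ y ∈ Set.Icc (x₀ - d - ε) (x₀ + d + ε),
          max (φt y) (-(K₀ + n)) = φt y := by
        intro y hy
        have hb := hK₀ y hy
        rw [Real.norm_eq_abs] at hb
        have := abs_le.mp hb
        exact max_eq_left (by linarith [this.1, (Nat.cast_nonneg n : (0:ℝ) ≤ (n:ℝ))])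
      have hgc : ∀ x ∈ Set.Icc (x₀ - d) (x₀ + d),
          max (φt x) (-(K₀ + n)) ≤ max (φt (x + (ε - d))) (-(K₀ + n)) := by
        intro x hx
        rw [hgneq x ⟨by linarith [hx.1], by linarith [hx.2]⟩,
          hgneq _ ⟨by linarith [hx.1], by linarith [hx.2]⟩]
        exact hslope_c x hx
      have hgd : ∀ x ∈ Set.Icc (x₀ - d) (x₀ + d),
          max (φt x) (-(K₀ + n)) ≤ max (φt (x - (ε - d))) (-(K₀ + n)) := by
        intro x hx
        rw [hgneq x ⟨by linarith [hx.1], by linarith [hx.2]⟩,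
          hgneq _ ⟨by linarith [hx.1], by linarith [hx.2]⟩]
        exact hslope_d x hx
      have hcore := core hlam0 hlam1 hδ hδε hmargin hsupp hsupp₂ hrep h23 hπ1 hπ2 hπd
        hgnconv hgnK hgn4 hgc hgd
      have he : ∫ y, max (φt y) (-(K₀ + n)) ∂μ₁ = ∫ y, φt y ∂μ₁ := by
        apply integral_congr_ae
        have hae1 : ∀ᵐ y ∂μ₁, y ∈ Set.Icc (x₀ - d) (x₀ + d) := by
          rw [ae_iff]; simpa [Set.compl_def] using hsupp
        filter_upwards [hae1] with y hy using
          hgneq y ⟨by linarith [hy.1], by linarith [hy.2]⟩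
      linarith [hcore, le_of_eq he]
    have hlim : Filter.Tendsto (fun n : ℕ => ∫ y, max (φt y) (-(K₀ + n)) ∂μ₄)
        Filter.atTop (nhds (∫ y, φt y ∂μ₄)) := by
      refine tendsto_integral_of_dominated_convergence (fun y => ‖φt y‖ + K₀)
        (fun n => (cφt.max continuous_const).aestronglyMeasurable)
        (hφt4.norm.add (integrable_const K₀)) (fun n => Filter.Eventually.of_forall fun y => ?_)
        (Filter.Eventually.of_forall fun y => ?_)
      · rw [Real.norm_eq_abs]
        rcases le_total (-(K₀ + (n:ℝ))) (φt y) with hy | hy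
        · rw [max_eq_left hy, ← Real.norm_eq_abs]
          have := (Nat.cast_nonneg n : (0:ℝ) ≤ (n:ℝ))
          linarith
        · rw [max_eq_right hy]
          have h1 : |(-(K₀ + (n:ℝ)))| = K₀ + n := by
            rw [abs_of_nonpos (by linarith [hK₀0, (Nat.cast_nonneg n : (0:ℝ) ≤ (n:ℝ))])]
            ring
          rw [h1]
          have h2 : K₀ + (n:ℝ) ≤ ‖φt y‖ := by
            rw [Real.norm_eq_abs]
            linarith [neg_abs_le (φt y)]
          linarith
      · obtain ⟨m, hm⟩ := exists_nat_ge (-(φt y) - K₀)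
        refine Filter.Tendsto.congr' ?_ tendsto_const_nhds
        rw [Filter.EventuallyEq, Filter.eventually_atTop]
        refine ⟨m, fun k hk => ?_⟩
        have hcast : (m:ℝ) ≤ k := Nat.cast_le.mpr hk
        exact (max_eq_left (by linarith)).symm
    have h14 : ∫ y, φt y ∂μ₁ ≤ ∫ y, φt y ∂μ₄ := ge_of_tendsto' hlim key
    calc ∫ y, φ y ∂μ₁ = ∫ y, φt y ∂μ₁ := hshift1.symm
      _ ≤ ∫ y, φt y ∂μ₄ := h14
      _ = ∫ y, φ y ∂μ₄ := hshift4
  · by_cases hr : Integrable (fun y : ℝ => max y 0) μ₄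
    · by_cases hl : Integrable (fun y : ℝ => max (-y) 0) μ₄
      · refine absurd ((hr.sub hl).congr (Filter.Eventually.of_forall fun y => ?_)) hid4
        simp only [Pi.sub_apply]
        rcases le_total y 0 with h | h
        · rw [max_eq_right h, max_eq_left (by linarith)]; ring
        · rw [max_eq_left h, max_eq_right (by linarith)]; ring
      · -- right tail integrable, left tail not : contradiction
        exfalso
        have hr3 : Integrable (fun y : ℝ => max y 0) μ₃ := by
          refine integrable_fst_of_snd (f := fun y : ℝ => max y 0) (G := fun y : ℝ => max y 0)
            hπ1 hπ2 (continuous_id'.max continuous_const)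
            (continuous_id'.max continuous_const) hr d ?_
          filter_upwards [hπab] with p hp
          rw [Real.norm_eq_abs, abs_of_nonneg (le_max_right _ _)]
          exact max_le (by linarith [hp.2, le_max_left p.2 (0:ℝ)])
            (add_nonneg (le_max_right _ _) hδ.le)
        have hl3 : ¬ Integrable (fun y : ℝ => max (-y) 0) μ₃ := by
          intro hcon
          apply hl
          refine integrable_snd_of_fst (f := fun y : ℝ => max (-y) 0)
            (G := fun y : ℝ => max (-y) 0) hπ1 hπ2 (continuous_neg.max continuous_const)
            (continuous_neg.max continuous_const) hcon d ?_
          filter_upwards [hπab] with p hp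
          rw [Real.norm_eq_abs, abs_of_nonneg (le_max_right _ _)]
          exact max_le (by linarith [hp.1, le_max_left (-p.1) (0:ℝ)])
            (add_nonneg (le_max_right _ _) hδ.le)
        have hbound : ∀ A : ℝ, A ≤ x₀ - d - ε - 1 → x₀ ≤ ∫ y, max y A ∂μ₃ := by
          intro A hA
          have hconv := convexOn_hinge_pos A
          have hcont : Continuous fun y : ℝ => max (y - A) 0 :=
            (continuous_id.sub continuous_const).max continuous_const
          have hfA2 : Integrable (fun y => max (y - A) 0) μ₂ := integrable_of_support hsupp₂ hcont
          have hfA3 : Integrable (fun y => max (y - A) 0) μ₃ := by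
            refine Integrable.mono' (hr3.add (integrable_const |A|))
              hcont.aestronglyMeasurable (Filter.Eventually.of_forall fun y => ?_)
            simp only [Pi.add_apply]
            rw [Real.norm_eq_abs, abs_of_nonneg (le_max_right _ _)]
            refine max_le ?_ (add_nonneg (le_max_right _ _) (abs_nonneg A))
            linarith [le_max_left y (0:ℝ), neg_abs_le A]
          have h1 := h23 _ hconv hfA2 hfA3
          have h2 : ∫ y, max (y - A) 0 ∂μ₂ = x₀ - A := by
            have he : ∀ᵐ y ∂μ₂, max (y - A) 0 = y - A := by
              filter_upwards [hae2] with y hy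
              exact max_eq_left (by linarith [hy.1])
            rw [integral_congr_ae he, integral_sub hid2 (integrable_const A), hmean₂,
              integral_const]
            simp
          have h3 : ∫ y, max y A ∂μ₃ = (∫ y, max (y - A) 0 ∂μ₃) + A := by
            have he : (fun y : ℝ => max y A) = fun y => max (y - A) 0 + A := by
              funext y
              rw [← max_add_add_right, show y - A + A = y by ring, zero_add]
            rw [he, integral_add hfA3 (integrable_const A), integral_const]
            simp
          linarith
        refine hl3 (integrable_of_min_bounds (continuous_neg.max continuous_const)
          (fun y => le_max_right _ _) ((∫ y, max y 0 ∂μ₃) - x₀) (fun n => ?_))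
        set A : ℝ := min (x₀ - d - ε - 1) (-((n:ℝ)+1)) with hA
        have hA1 : A ≤ x₀ - d - ε - 1 := min_le_left _ _
        have hA2 : (n:ℝ) + 1 ≤ -A := by
          have := min_le_right (x₀ - d - ε - 1) (-((n:ℝ)+1)); linarith
        have hA0 : A ≤ 0 := by linarith [(Nat.cast_nonneg n : (0:ℝ) ≤ (n:ℝ))]
        have hb := hbound A hA1
        have hidy : ∀ y : ℝ, min (max (-y) 0) (-A) = max y 0 - max y A := by
          intro y
          simp only [max_def, min_def]
          split_ifs <;> linarith
        have hintA : Integrable (fun y => max y A) μ₃ := by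
          refine Integrable.mono' (hr3.add (integrable_const |A|))
            ((continuous_id.max continuous_const).aestronglyMeasurable)
            (Filter.Eventually.of_forall fun y => ?_)
          simp only [Pi.add_apply]
          rw [Real.norm_eq_abs, abs_le]
          constructor
          · have h1 := neg_abs_le A
            have := le_max_right y A
            have := le_max_right y (0:ℝ)
            linarith
          · exact max_le (by linarith [le_max_left y (0:ℝ), abs_nonneg A])
              (by linarith [neg_abs_le A, le_abs_self A, le_max_right y (0:ℝ)])
        have hintmin : Integrable (fun y : ℝ => min (max (-y) 0) (-A)) μ₃ := by
          refine Integrable.mono' (integrable_const (-A))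
            (((continuous_neg.max continuous_const).min continuous_const).aestronglyMeasurable)
            (Filter.Eventually.of_forall fun y => ?_)
          rw [Real.norm_eq_abs, abs_of_nonneg (le_min (le_max_right _ _) (by linarith))]
          exact min_le_right _ _
        have hintmin2 : Integrable (fun y : ℝ => min (max (-y) 0) ((n:ℝ)+1)) μ₃ := by
          refine Integrable.mono' (integrable_const ((n:ℝ)+1))
            (((continuous_neg.max continuous_const).min continuous_const).aestronglyMeasurable)
            (Filter.Eventually.of_forall fun y => ?_)
          rw [Real.norm_eq_abs, abs_of_nonneg (le_min (le_max_right _ _) (by positivity))]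
          exact min_le_right _ _
        have hc1 : ∫ y, min (max (-y) 0) ((n:ℝ)+1) ∂μ₃ ≤ ∫ y, min (max (-y) 0) (-A) ∂μ₃ :=
          integral_mono hintmin2 hintmin fun y => min_le_min (le_refl _) (by linarith)
        have hc2 : ∫ y, min (max (-y) 0) (-A) ∂μ₃
            = (∫ y, max y 0 ∂μ₃) - ∫ y, max y A ∂μ₃ := by
          rw [show (fun y : ℝ => min (max (-y) 0) (-A)) = fun y => max y 0 - max y A from
            funext hidy, integral_sub hr3 hintA]
        linarith
    · by_cases hl : Integrable (fun y : ℝ => max (-y) 0) μ₄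
      · -- left tail integrable, right tail not : contradiction
        exfalso
        have hl3 : Integrable (fun y : ℝ => max (-y) 0) μ₃ := by
          refine integrable_fst_of_snd (f := fun y : ℝ => max (-y) 0)
            (G := fun y : ℝ => max (-y) 0) hπ1 hπ2 (continuous_neg.max continuous_const)
            (continuous_neg.max continuous_const) hl d ?_
          filter_upwards [hπab] with p hp
          rw [Real.norm_eq_abs, abs_of_nonneg (le_max_right _ _)]
          exact max_le (by linarith [hp.1, le_max_left (-p.2) (0:ℝ)])
            (add_nonneg (le_max_right _ _) hδ.le)
        have hr3 : ¬ Integrable (fun y : ℝ => max y 0) μ₃ := by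
          intro hcon
          apply hr
          refine integrable_snd_of_fst (f := fun y : ℝ => max y 0)
            (G := fun y : ℝ => max y 0) hπ1 hπ2 (continuous_id'.max continuous_const)
            (continuous_id'.max continuous_const) hcon d ?_
          filter_upwards [hπab] with p hp
          rw [Real.norm_eq_abs, abs_of_nonneg (le_max_right _ _)]
          exact max_le (by linarith [hp.2, le_max_left p.1 (0:ℝ)])
            (add_nonneg (le_max_right _ _) hδ.le)
        have hbound : ∀ A : ℝ, x₀ + d + ε + 1 ≤ A → -x₀ ≤ ∫ y, max (-y) (-A) ∂μ₃ := by
          intro A hA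
          have hconv := convexOn_hinge_neg A
          have hcont : Continuous fun y : ℝ => max (A - y) 0 :=
            (continuous_const.sub continuous_id).max continuous_const
          have hfA2 : Integrable (fun y => max (A - y) 0) μ₂ := integrable_of_support hsupp₂ hcont
          have hfA3 : Integrable (fun y => max (A - y) 0) μ₃ := by
            refine Integrable.mono' (hl3.add (integrable_const |A|))
              hcont.aestronglyMeasurable (Filter.Eventually.of_forall fun y => ?_)
            simp only [Pi.add_apply]
            rw [Real.norm_eq_abs, abs_of_nonneg (le_max_right _ _)]
            refine max_le ?_ (add_nonneg (le_max_right _ _) (abs_nonneg A))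
            linarith [le_max_left (-y) (0:ℝ), le_abs_self A]
          have h1 := h23 _ hconv hfA2 hfA3
          have h2 : ∫ y, max (A - y) 0 ∂μ₂ = A - x₀ := by
            have he : ∀ᵐ y ∂μ₂, max (A - y) 0 = A - y := by
              filter_upwards [hae2] with y hy
              exact max_eq_left (by linarith [hy.2])
            rw [integral_congr_ae he, integral_sub (integrable_const A) hid2, hmean₂,
              integral_const]
            simp
          have h3 : ∫ y, max (-y) (-A) ∂μ₃ = (∫ y, max (A - y) 0 ∂μ₃) + -A := by
            have he : (fun y : ℝ => max (-y) (-A)) = fun y => max (A - y) 0 + -A := by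
              funext y
              rw [← max_add_add_right, show A - y + -A = -y by ring, zero_add]
            rw [he, integral_add hfA3 (integrable_const (-A)), integral_const]
            simp
          linarith
        refine hr3 (integrable_of_min_bounds (continuous_id'.max continuous_const)
          (fun y => le_max_right _ _) ((∫ y, max (-y) 0 ∂μ₃) + x₀) (fun n => ?_))
        set A : ℝ := max (x₀ + d + ε + 1) ((n:ℝ)+1) with hA
        have hA1 : x₀ + d + ε + 1 ≤ A := le_max_left _ _
        have hA2 : (n:ℝ) + 1 ≤ A := le_max_right _ _
        have hA0 : 0 ≤ A := by linarith [(Nat.cast_nonneg n : (0:ℝ) ≤ (n:ℝ))]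
        have hb := hbound A hA1
        have hidy : ∀ y : ℝ, min (max y 0) A = max (-y) 0 - max (-y) (-A) := by
          intro y
          simp only [max_def, min_def]
          split_ifs <;> linarith
        have hintA : Integrable (fun y => max (-y) (-A)) μ₃ := by
          refine Integrable.mono' (hl3.add (integrable_const |A|))
            ((continuous_neg.max continuous_const).aestronglyMeasurable)
            (Filter.Eventually.of_forall fun y => ?_)
          simp only [Pi.add_apply]
          rw [Real.norm_eq_abs, abs_le]
          constructor
          · have := le_max_right (-y) (-A)
            have := le_max_right (-y) (0:ℝ)
            linarith [le_abs_self A]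
          · exact max_le (by linarith [le_max_left (-y) (0:ℝ), abs_nonneg A])
              (by linarith [neg_abs_le A, le_max_right (-y) (0:ℝ)])
        have hintmin : Integrable (fun y : ℝ => min (max y 0) A) μ₃ := by
          refine Integrable.mono' (integrable_const A)
            (((continuous_id'.max continuous_const).min continuous_const).aestronglyMeasurable)
            (Filter.Eventually.of_forall fun y => ?_)
          rw [Real.norm_eq_abs, abs_of_nonneg (le_min (le_max_right _ _) hA0)]
          exact min_le_right _ _
        have hintmin2 : Integrable (fun y : ℝ => min (max y 0) ((n:ℝ)+1)) μ₃ := by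
          refine Integrable.mono' (integrable_const ((n:ℝ)+1))
            (((continuous_id'.max continuous_const).min continuous_const).aestronglyMeasurable)
            (Filter.Eventually.of_forall fun y => ?_)
          rw [Real.norm_eq_abs, abs_of_nonneg (le_min (le_max_right _ _) (by positivity))]
          exact min_le_right _ _
        have hc1 : ∫ y, min (max y 0) ((n:ℝ)+1) ∂μ₃ ≤ ∫ y, min (max y 0) A ∂μ₃ :=
          integral_mono hintmin2 hintmin fun y => min_le_min (le_refl _) hA2
        have hc2 : ∫ y, min (max y 0) A ∂μ₃
            = (∫ y, max (-y) 0 ∂μ₃) - ∫ y, max (-y) (-A) ∂μ₃ := by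
          rw [show (fun y : ℝ => min (max y 0) A) = fun y => max (-y) 0 - max (-y) (-A) from
            funext hidy, integral_sub hl3 hintA]
        linarith
      · -- both tails non-integrable : φ is constant
        have hup : ∀ u v : ℝ, u < v → φ v ≤ φ u := by
          intro u v huv
          by_contra hcon
          push_neg at hcon
          apply hr
          set σ : ℝ := (φ v - φ u) / (v - u) with hσdef
          have hσ : 0 < σ := div_pos (by linarith) (by linarith)
          have hgrow : ∀ y, v ≤ y → φ u + σ * (y - u) ≤ φ y := by
            intro y hy
            have hlf := lower_far_right hφ (show (0:ℝ) < v - u by linarith)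
              (show u + (v - u) ≤ y by linarith)
            rw [show u + (v - u) = v by ring] at hlf
            rw [← hσdef] at hlf
            exact hlf
          refine Integrable.mono'
            (g := fun y => (max v 0 + |u| + (1/σ) * ‖φ u‖) + (1/σ) * ‖φ y‖)
            ((integrable_const _).add (hφ4.norm.const_mul _))
            ((continuous_id'.max continuous_const).aestronglyMeasurable)
            (Filter.Eventually.of_forall fun y => ?_)
          rw [Real.norm_eq_abs, abs_of_nonneg (le_max_right y 0)]
          have h0' : 0 ≤ (1/σ) * ‖φ u‖ := by positivity
          have h0'' : 0 ≤ (1/σ) * ‖φ y‖ := by positivity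
          rcases le_or_gt y v with hyv | hyv
          · have hmm : max y 0 ≤ max v 0 := max_le_max hyv (le_refl 0)
            linarith [abs_nonneg u]
          · have hgy := hgrow y hyv.le
            rcases le_or_gt y 0 with hy0 | hy0
            · rw [max_eq_right hy0]
              linarith [le_max_right v (0:ℝ), abs_nonneg u]
            · rw [max_eq_left hy0.le]
              have h1 : σ * (y - u) ≤ φ y - φ u := by linarith
              have h2 : y - u ≤ (φ y - φ u) / σ := (le_div_iff₀ hσ).mpr (by nlinarith [h1])
              have h3 : (φ y - φ u) / σ ≤ (1/σ) * ‖φ y‖ + (1/σ) * ‖φ u‖ := by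
                have hle : φ y - φ u ≤ ‖φ y‖ + ‖φ u‖ := by
                  rw [Real.norm_eq_abs, Real.norm_eq_abs]
                  linarith [le_abs_self (φ y), neg_abs_le (φ u)]
                calc (φ y - φ u) / σ = (1/σ) * (φ y - φ u) := by ring
                  _ ≤ (1/σ) * (‖φ y‖ + ‖φ u‖) :=
                      mul_le_mul_of_nonneg_left hle (by positivity)
                  _ = (1/σ) * ‖φ y‖ + (1/σ) * ‖φ u‖ := by ring
              linarith [le_max_right v (0:ℝ), le_abs_self u]
        have hdown : ∀ u v : ℝ, u < v → φ u ≤ φ v := by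
          intro u v huv
          by_contra hcon
          push_neg at hcon
          apply hl
          set σ : ℝ := (φ u - φ v) / (v - u) with hσdef
          have hσ : 0 < σ := div_pos (by linarith) (by linarith)
          have hgrow : ∀ y, y ≤ u → φ v + σ * (v - y) ≤ φ y := by
            intro y hy
            have hlf := lower_far_left hφ (show (0:ℝ) < v - u by linarith)
              (show y ≤ v - (v - u) by linarith)
            rw [show v - (v - u) = u by ring] at hlf
            have he : (φ v - φ u) / (v - u) * (y - v) = σ * (v - y) := by
              rw [hσdef]; ring
            rw [he] at hlf
            exact hlf
          refine Integrable.mono'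
            (g := fun y => (max (-u) 0 + |v| + (1/σ) * ‖φ v‖) + (1/σ) * ‖φ y‖)
            ((integrable_const _).add (hφ4.norm.const_mul _))
            ((continuous_neg.max continuous_const).aestronglyMeasurable)
            (Filter.Eventually.of_forall fun y => ?_)
          rw [Real.norm_eq_abs, abs_of_nonneg (le_max_right (-y) 0)]
          have h0' : 0 ≤ (1/σ) * ‖φ v‖ := by positivity
          have h0'' : 0 ≤ (1/σ) * ‖φ y‖ := by positivity
          rcases le_or_gt u y with hyu | hyu
          · have hmm : max (-y) 0 ≤ max (-u) 0 := max_le_max (by linarith) (le_refl 0)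
            linarith [abs_nonneg v]
          · have hgy := hgrow y hyu.le
            rcases le_or_gt 0 y with hy0 | hy0
            · rw [max_eq_right (by linarith)]
              linarith [le_max_right (-u) (0:ℝ), abs_nonneg v]
            · rw [max_eq_left (by linarith)]
              have h1 : σ * (v - y) ≤ φ y - φ v := by linarith
              have h2 : v - y ≤ (φ y - φ v) / σ := (le_div_iff₀ hσ).mpr (by nlinarith [h1])
              have h3 : (φ y - φ v) / σ ≤ (1/σ) * ‖φ y‖ + (1/σ) * ‖φ v‖ := by
                have hle : φ y - φ v ≤ ‖φ y‖ + ‖φ v‖ := by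
                  rw [Real.norm_eq_abs, Real.norm_eq_abs]
                  linarith [le_abs_self (φ y), neg_abs_le (φ v)]
                calc (φ y - φ v) / σ = (1/σ) * (φ y - φ v) := by ring
                  _ ≤ (1/σ) * (‖φ y‖ + ‖φ v‖) :=
                      mul_le_mul_of_nonneg_left hle (by positivity)
                  _ = (1/σ) * ‖φ y‖ + (1/σ) * ‖φ v‖ := by ring
              linarith [le_max_right (-u) (0:ℝ), neg_abs_le v]
        have hcst : ∀ y, φ y = φ 0 := by
          intro y
          rcases lt_trichotomy y 0 with h | h | h
          · exact le_antisymm (hdown y 0 h) (hup y 0 h)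
          · rw [h]
          · exact le_antisymm (hup 0 y h) (hdown 0 y h)
        rw [show φ = fun _ => φ 0 from funext hcst, integral_const, integral_const]
        simp [measure_univ]
end
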